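/- arXiv:1407.5279 — 7 statements merged into one kernel-verified Lean document; each statement's English description precedes it below -/
import Mathlib

section
/- Let D ⊆ Δ⁺ be a basic subset. Then M(D) is closed under addition of roots: if α, β ∈ M(D) and the sum α + β is defined (i.e., is again a root), then α + β ∈ M(D). -/
/-- A positive root `(i,j)`: `n ≥ i > j ≥ 1`. -/
def IsPosRoot (n : ℕ) (γ : ℕ × ℕ) : Prop := 1 ≤ γ.2 ∧ γ.2 < γ.1 ∧ γ.1 ≤ n

/-- `γ` is the sum of the roots `α` and `β` (in either order):
`(i,j) + (j,k) = (i,k)`. -/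
def RootSum (α β γ : ℕ × ℕ) : Prop :=
  (α.2 = β.1 ∧ γ = (α.1, β.2)) ∨ (β.2 = α.1 ∧ γ = (β.1, α.2))

/-- A basic subset: a set of positive roots with at most one root in each
row and at most one root in each column. -/
def IsBasic (n : ℕ) (D : Set (ℕ × ℕ)) : Prop :=
  (∀ γ ∈ D, IsPosRoot n γ) ∧
  (∀ α ∈ D, ∀ β ∈ D, α.1 = β.1 → α = β) ∧
  (∀ α ∈ D, ∀ β ∈ D, α.2 = β.2 → α = β)

/-- A positive root `α` is `D`-singular if `α + β ∈ D` for some positive root `β`. -/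
def IsSingular (n : ℕ) (D : Set (ℕ × ℕ)) (α : ℕ × ℕ) : Prop :=
  IsPosRoot n α ∧ ∃ β γ, IsPosRoot n β ∧ RootSum α β γ ∧ γ ∈ D

/-- `M(D) = R(D) \ D`, where `R(D)` is the set of `D`-regular positive roots. -/
def MD (n : ℕ) (D : Set (ℕ × ℕ)) : Set (ℕ × ℕ) :=
  {γ | IsPosRoot n γ ∧ ¬ IsSingular n D γ ∧ γ ∉ D}

lemma md_helper (n : ℕ) (D : Set (ℕ × ℕ))
    (α β : ℕ × ℕ) (hα : α ∈ MD n D) (hβ : β ∈ MD n D)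
    (h : α.2 = β.1) : (α.1, β.2) ∈ MD n D := by
  obtain ⟨hpα, hnsα, hαD⟩ := hα
  obtain ⟨hpβ, hnsβ, hβD⟩ := hβ
  obtain ⟨h1α, h2α, h3α⟩ := hpα
  obtain ⟨h1β, h2β, h3β⟩ := hpβ
  have hpγ : IsPosRoot n (α.1, β.2) := ⟨h1β, by omega, h3α⟩
  refine ⟨hpγ, ?_, ?_⟩
  · rintro ⟨_, δ, ε, hpδ, hrs, hεD⟩
    obtain ⟨h1δ, h2δ, h3δ⟩ := hpδ
    rcases hrs with ⟨hd1, hd2⟩ | ⟨hd1, hd2⟩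
    · simp only at hd1 hd2
      exact hnsα ⟨⟨h1α, h2α, h3α⟩, (α.2, δ.2), ε,
        ⟨h1δ, by omega, by omega⟩, Or.inl ⟨rfl, by rw [hd2]⟩, hεD⟩
    · simp only at hd1 hd2
      exact hnsβ ⟨⟨h1β, h2β, h3β⟩, (δ.1, β.1), ε,
        ⟨by omega, by omega, h3δ⟩, Or.inr ⟨rfl, by rw [hd2]⟩, hεD⟩
  · intro hγD
    exact hnsα ⟨⟨h1α, h2α, h3α⟩, β, (α.1, β.2), ⟨h1β, h2β, h3β⟩,
      Or.inl ⟨h, rfl⟩, hγD⟩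

/-- If `α, β ∈ M(D)` and the sum `α + β = γ` is defined, then
`γ ∈ M(D)`, i.e. `M(D)` is closed under addition of roots. -/
theorem stmt0 (n : ℕ) (hn : 2 ≤ n) (D : Set (ℕ × ℕ)) (hD : IsBasic n D)
    (α β γ : ℕ × ℕ) (hα : α ∈ MD n D) (hβ : β ∈ MD n D)
    (hsum : RootSum α β γ) : γ ∈ MD n D := by
  rcases hsum with ⟨h, rfl⟩ | ⟨h, rfl⟩
  · exact md_helper n D α β hα hβ h
  · exact md_helper n D β α hβ hα h
end

section
/- Let D ⊆ Δ⁺ be a basic subset. Define w_D(j) for j = 1,…,n recursively: w_D(j) is the greatest i ∈ {1,…,n} such that (i,j) ∉ M(D) and i ∉ {w_D(1),…,w_D(j−1)}. Then for every j ∈ {1,…,n} at least one such i exists (so w_D(j) is well defined), and the resulting map w_D : {1,…,n} → {1,…,n} is a bijection. -/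
/-- The list `[w_D(1), …, w_D(j)]`, defined recursively: `w_D(j)` is the
greatest `i ∈ {1,…,n}` with `(i,j) ∉ M(D)` and `i ∉ {w_D(1),…,w_D(j-1)}`. -/
noncomputable def wDVals (n : ℕ) (D : Set (ℕ × ℕ)) : ℕ → List ℕ
  | 0 => []
  | j + 1 =>
    let prev := wDVals n D j
    prev ++ [sSup {i | 1 ≤ i ∧ i ≤ n ∧ (i, j + 1) ∉ MD n D ∧ i ∉ prev}]

/-- The permutation `w_D` associated with a basic subset `D` (as a map `ℕ → ℕ`,
meaningful on `{1,…,n}`). -/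
noncomputable def wD (n : ℕ) (D : Set (ℕ × ℕ)) (j : ℕ) : ℕ :=
  ((wDVals n D j).getLast?).getD 0

/-- There is an unused index `i ≤ j` whenever the list has length `j - 1`. -/
lemma exists_new (j : ℕ) (hj : 1 ≤ j) (l : List ℕ) (hl : l.length = j - 1) :
    ∃ i, 1 ≤ i ∧ i ≤ j ∧ i ∉ l := by
  by_contra h
  push_neg at h
  have hsub : Finset.Icc 1 j ⊆ l.toFinset := by
    intro i hi
    rw [Finset.mem_Icc] at hi
    exact List.mem_toFinset.2 (h i hi.1 hi.2)
  have h1 := Finset.card_le_card hsub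
  have h2 : l.toFinset.card ≤ l.length := l.toFinset_card_le
  rw [Nat.card_Icc] at h1
  omega

lemma length_wDVals (n : ℕ) (D : Set (ℕ × ℕ)) (j : ℕ) :
    (wDVals n D j).length = j := by
  induction j with
  | zero => simp [wDVals]
  | succ k ih => simp [wDVals, ih]

/-- If `i ≤ j` then `(i,j)` is not a positive root, hence not in `M(D)`. -/
lemma not_mem_MD_of_le (n : ℕ) (D : Set (ℕ × ℕ)) {i j : ℕ} (h : i ≤ j) :
    (i, j) ∉ MD n D := by
  intro hmem
  have := hmem.1.2.1
  simp at this
  omega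

lemma wDVals_succ (n : ℕ) (D : Set (ℕ × ℕ)) (k : ℕ) :
    wDVals n D (k + 1) = wDVals n D k ++
      [sSup {i | 1 ≤ i ∧ i ≤ n ∧ (i, k + 1) ∉ MD n D ∧ i ∉ wDVals n D k}] := by
  simp [wDVals]

lemma sSup_mem_S (n : ℕ) (D : Set (ℕ × ℕ)) (k : ℕ) (hkn : k + 1 ≤ n) :
    IsGreatest {i | 1 ≤ i ∧ i ≤ n ∧ (i, k + 1) ∉ MD n D ∧ i ∉ wDVals n D k}
      (sSup {i | 1 ≤ i ∧ i ≤ n ∧ (i, k + 1) ∉ MD n D ∧ i ∉ wDVals n D k}) := by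
  set S := {i | 1 ≤ i ∧ i ≤ n ∧ (i, k + 1) ∉ MD n D ∧ i ∉ wDVals n D k} with hS
  have hne : S.Nonempty := by
    obtain ⟨i, hi1, hi2, hi3⟩ := exists_new (k + 1) (by omega) (wDVals n D k)
      (by simp [length_wDVals])
    exact ⟨i, hi1, by omega, not_mem_MD_of_le n D hi2, hi3⟩
  have hbdd : BddAbove S := ⟨n, fun i hi => hi.2.1⟩
  exact ⟨Nat.sSup_mem hne hbdd, fun i hi => le_csSup hbdd hi⟩

lemma wD_eq_sSup (n : ℕ) (D : Set (ℕ × ℕ)) (k : ℕ) :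
    wD n D (k + 1) =
      sSup {i | 1 ≤ i ∧ i ≤ n ∧ (i, k + 1) ∉ MD n D ∧ i ∉ wDVals n D k} := by
  rw [wD, wDVals_succ]
  simp

lemma wD_mem_wDVals (n : ℕ) (D : Set (ℕ × ℕ)) (k : ℕ) :
    wD n D (k + 1) ∈ wDVals n D (k + 1) := by
  rw [wD_eq_sSup, wDVals_succ]
  simp

lemma wDVals_mono (n : ℕ) (D : Set (ℕ × ℕ)) {a j k : ℕ} (hjk : j ≤ k)
    (ha : a ∈ wDVals n D j) : a ∈ wDVals n D k := by
  induction k with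
  | zero =>
    have : j = 0 := Nat.le_zero.mp hjk
    subst this; exact ha
  | succ m ih =>
    rcases Nat.lt_or_ge j (m + 1) with h | h
    · rw [wDVals_succ]
      exact List.mem_append_left _ (ih (by omega))
    · have : j = m + 1 := by omega
      subst this; exact ha

/-- for each `j ∈ {1,…,n}` there exists at least one `i` with
`(i,j) ∉ M(D)` and `i` not among the previous values, `w_D(j)` is the greatest
such `i`, and `w_D` is a bijection of `{1,…,n}`. -/
theorem stmt1 (n : ℕ) (hn : 2 ≤ n) (D : Set (ℕ × ℕ)) (hD : IsBasic n D) :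
    (∀ j, 1 ≤ j → j ≤ n →
      IsGreatest {i | 1 ≤ i ∧ i ≤ n ∧ (i, j) ∉ MD n D ∧ i ∉ wDVals n D (j - 1)}
        (wD n D j)) ∧
    Set.BijOn (wD n D) (Set.Icc 1 n) (Set.Icc 1 n) := by
  have hgreat : ∀ j, 1 ≤ j → j ≤ n →
      IsGreatest {i | 1 ≤ i ∧ i ≤ n ∧ (i, j) ∉ MD n D ∧ i ∉ wDVals n D (j - 1)}
        (wD n D j) := by
    intro j hj hjn
    obtain ⟨k, rfl⟩ : ∃ k, j = k + 1 := ⟨j - 1, by omega⟩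
    simp only [Nat.add_sub_cancel]
    rw [wD_eq_sSup]
    exact sSup_mem_S n D k hjn
  refine ⟨hgreat, ?_⟩
  have hmaps : Set.MapsTo (wD n D) (Set.Icc 1 n) (Set.Icc 1 n) := by
    intro j hj
    rw [Set.mem_Icc] at hj ⊢
    have h := (hgreat j hj.1 hj.2).1
    exact ⟨h.1, h.2.1⟩
  have hinj : Set.InjOn (wD n D) (Set.Icc 1 n) := by
    have key : ∀ j₁ j₂, j₁ ∈ Set.Icc 1 n → j₂ ∈ Set.Icc 1 n → j₁ < j₂ →
        wD n D j₁ ≠ wD n D j₂ := by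
      intro j₁ j₂ hj₁ hj₂ hlt heq
      rw [Set.mem_Icc] at hj₁ hj₂
      have h2 := (hgreat j₂ hj₂.1 hj₂.2).1
      have hnotmem : wD n D j₂ ∉ wDVals n D (j₂ - 1) := h2.2.2.2
      obtain ⟨k, rfl⟩ : ∃ k, j₁ = k + 1 := ⟨j₁ - 1, by omega⟩
      have hmem : wD n D (k + 1) ∈ wDVals n D (j₂ - 1) :=
        wDVals_mono n D (by omega) (wD_mem_wDVals n D k)
      rw [heq] at hmem
      exact hnotmem hmem
    intro j₁ hj₁ j₂ hj₂ heq
    by_contra hne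
    rcases Nat.lt_or_ge j₁ j₂ with h | h
    · exact key j₁ j₂ hj₁ hj₂ h heq
    · exact key j₂ j₁ hj₂ hj₁ (by omega) heq.symm
  exact ((Set.finite_Icc 1 n).injOn_iff_bijOn_of_mapsTo hmaps).1 hinj
end

section
/- Let D ⊆ Δ⁺ be a basic subset and let i > j. If (i,j) ∈ D, then w_D(j) = i. Conversely, if w_D(j) > j, then the positive root (w_D(j), j) belongs to D. -/
def WSet (n : ℕ) (D : Set (ℕ × ℕ)) (j : ℕ) : Set ℕ :=
  {i | 1 ≤ i ∧ i ≤ n ∧ (i, j + 1) ∉ MD n D ∧ i ∉ wDVals n D j}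

lemma wD_succ (n : ℕ) (D : Set (ℕ × ℕ)) (j : ℕ) :
    wD n D (j + 1) = sSup (WSet n D j) := by
  unfold wD wDVals WSet
  simp

lemma mem_wDVals (n : ℕ) (D : Set (ℕ × ℕ)) (j i : ℕ) :
    i ∈ wDVals n D j ↔ ∃ k, k < j ∧ wD n D (k + 1) = i := by
  induction j with
  | zero => simp [wDVals]
  | succ j ih =>
    rw [wDVals]
    simp only [List.mem_append, List.mem_singleton, ih]
    constructor
    · rintro (⟨k, hk, hw⟩ | h)
      · exact ⟨k, by omega, hw⟩
      · exact ⟨j, by omega, by rw [wD_succ]; exact h.symm⟩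
    · rintro ⟨k, hk, hw⟩
      rcases Nat.lt_or_ge k j with h | h
      · exact Or.inl ⟨k, h, hw⟩
      · have : k = j := by omega
        subst this
        right
        rw [wD_succ] at hw
        exact hw.symm

lemma SSet_bdd (n : ℕ) (D : Set (ℕ × ℕ)) (j : ℕ) : BddAbove (WSet n D j) :=
  ⟨n, fun _ hx => hx.2.1⟩

lemma SSet_nonempty (n : ℕ) (D : Set (ℕ × ℕ)) (j : ℕ) (hj : j + 1 ≤ n) :
    (WSet n D j).Nonempty := by
  obtain ⟨i, hi1, hi2, hi3⟩ : ∃ i, 1 ≤ i ∧ i ≤ j + 1 ∧ i ∉ wDVals n D j := by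
    by_contra h
    push_neg at h
    have hsub : Finset.Icc 1 (j + 1) ⊆ (wDVals n D j).toFinset := by
      intro i hi
      simp only [Finset.mem_Icc] at hi
      simpa using h i hi.1 hi.2
    have h1 := Finset.card_le_card hsub
    have h2 := (wDVals n D j).toFinset_card_le
    rw [Nat.card_Icc] at h1
    rw [length_wDVals] at h2
    omega
  refine ⟨i, hi1, hi2.trans hj, fun hm => ?_, hi3⟩
  have := hm.1.2.1
  simp only at this
  omega

lemma wD_mem (n : ℕ) (D : Set (ℕ × ℕ)) (j : ℕ) (hj : j + 1 ≤ n) :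
    wD n D (j + 1) ∈ WSet n D j := by
  rw [wD_succ]
  exact Nat.sSup_mem (SSet_nonempty n D j hj) (SSet_bdd n D j)

/-- if `(i,j) ∈ D` (with `i > j`) then `w_D(j) = i`; conversely
if `w_D(j) > j` then `(w_D(j), j) ∈ D`. -/
theorem stmt2 (n : ℕ) (hn : 2 ≤ n) (D : Set (ℕ × ℕ)) (hD : IsBasic n D) :
    (∀ i j : ℕ, j < i → (i, j) ∈ D → wD n D j = i) ∧
    (∀ j : ℕ, 1 ≤ j → j ≤ n → j < wD n D j → (wD n D j, j) ∈ D) := by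
  obtain ⟨hpos, hrow, hcol⟩ := hD
  suffices H : ∀ j : ℕ, (∀ i, j < i → (i, j) ∈ D → wD n D j = i) ∧
      (1 ≤ j → j ≤ n → j < wD n D j → (wD n D j, j) ∈ D) by
    exact ⟨fun i j h1 h2 => (H j).1 i h1 h2, fun j h1 h2 h3 => (H j).2 h1 h2 h3⟩
  intro j
  induction j using Nat.strong_induction_on with
  | _ j IH =>
  obtain _ | j := j
  · constructor
    · intro i _ hiD
      exact absurd (hpos _ hiD).1 (by simp)
    · intro h; omega
  constructor
  · -- direction 1
    intro i hij hiD
    have hpr := hpos _ hiD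
    obtain ⟨hp1, hp2, hp3⟩ := hpr
    simp only at hp1 hp2 hp3
    have hiS : i ∈ WSet n D j := by
      refine ⟨by omega, hp3, fun hm => hm.2.2 hiD, ?_⟩
      intro hmem
      obtain ⟨k, hk, hwk⟩ := (mem_wDVals n D j i).mp hmem
      have hd2 := (IH (k + 1) (by omega)).2 (by omega) (by omega)
        (by rw [hwk]; omega)
      rw [hwk] at hd2
      have h5 := hrow _ hd2 _ hiD rfl
      simp only [Prod.mk.injEq] at h5
      omega
    have hub : ∀ i' ∈ WSet n D j, i' ≤ i := by
      rintro i' ⟨h1, h2, h3, h4⟩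
      by_contra hlt
      push_neg at hlt
      by_cases hD' : (i', j + 1) ∈ D
      · have h5 := hcol _ hiD _ hD' rfl
        simp only [Prod.mk.injEq] at h5
        omega
      have hsing : IsSingular n D (i', j + 1) := by
        by_contra hns
        exact h3 ⟨⟨by show (1:ℕ) ≤ j+1; omega, by show j+1 < i'; omega, h2⟩, hns, hD'⟩
      obtain ⟨_, β, γ, hβ, hrs, hγD⟩ := hsing
      obtain ⟨hb1, hb2, hb3⟩ := hβ
      rcases hrs with ⟨he, hγ⟩ | ⟨he, hγ⟩
      · -- β = (j+1, k), γ = (i', k) ∈ D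
        simp only at he
        have hklt : β.2 < j + 1 := by omega
        have hd1 := (IH β.2 (by omega)).1 i' (by omega) (by rw [← hγ]; exact hγD)
        obtain ⟨m, hm⟩ := Nat.exists_eq_succ_of_ne_zero (by omega : β.2 ≠ 0)
        rw [hm] at hd1
        exact h4 ((mem_wDVals n D j i').mpr ⟨m, by omega, hd1⟩)
      · -- β = (m, i'), γ = (m, j+1) ∈ D
        simp only at he
        have h5 := hcol _ hγD _ hiD (by rw [hγ])
        rw [hγ] at h5
        simp only [Prod.mk.injEq] at h5
        omega
    rw [wD_succ]
    exact le_antisymm (csSup_le ⟨i, hiS⟩ hub) (le_csSup (SSet_bdd n D j) hiS)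
  · -- direction 2
    intro _ h2 h3
    obtain ⟨hw1, hw2, hw3, hw4⟩ := wD_mem n D j h2
    set w := wD n D (j + 1) with hwdef
    by_cases hD' : (w, j + 1) ∈ D
    · exact hD'
    exfalso
    have hsing : IsSingular n D (w, j + 1) := by
      by_contra hns
      exact hw3 ⟨⟨by show (1:ℕ) ≤ j+1; omega, by show j+1 < w; omega, hw2⟩, hns, hD'⟩
    obtain ⟨_, β, γ, hβ, hrs, hγD⟩ := hsing
    obtain ⟨hb1, hb2, hb3⟩ := hβ
    rcases hrs with ⟨he, hγ⟩ | ⟨he, hγ⟩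
    · -- β = (j+1, k), γ = (w, k) ∈ D
      simp only at he
      have hklt : β.2 < j + 1 := by omega
      have hd1 := (IH β.2 (by omega)).1 w (by omega) (by rw [← hγ]; exact hγD)
      obtain ⟨m, hm⟩ := Nat.exists_eq_succ_of_ne_zero (by omega : β.2 ≠ 0)
      rw [hm] at hd1
      exact hw4 ((mem_wDVals n D j w).mpr ⟨m, by omega, hd1⟩)
    · -- β = (m, w), γ = (m, j+1) ∈ D
      simp only at he
      have hγpos := hpos _ hγD
      rw [hγ] at hγpos
      obtain ⟨_, hg2, hg3⟩ := hγpos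
      simp only at hg2 hg3
      have hmS : β.1 ∈ WSet n D j := by
        have hγD' : (β.1, j + 1) ∈ D := by rw [hγ] at hγD; exact hγD
        refine ⟨by omega, hg3, fun hm => hm.2.2 hγD', ?_⟩
        intro hmem
        obtain ⟨k, hk, hwk⟩ := (mem_wDVals n D j β.1).mp hmem
        have hd2 := (IH (k + 1) (by omega)).2 (by omega) (by omega)
          (by rw [hwk]; omega)
        rw [hwk] at hd2
        have h5 := hrow _ hd2 _ hγD' rfl
        simp only [Prod.mk.injEq] at h5
        omega
      have : β.1 ≤ w := by
        rw [hwdef, wD_succ]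
        exact le_csSup (SSet_bdd n D j) hmS
      omega
end

section
/- Let K be a field of characteristic zero, let w ∈ S_n and let A be an invertible n×n matrix over K. Then A belongs to the double coset B ẇ B if and only if for every 1 ≤ j ≤ n the following hold: P^w_{w(j),j}(A) ≠ 0, and P^w_{ij}(A) = 0 for every i ∈ I_{w,j} with i ≠ w(j). -/
open scoped Classical

/-- The minor `P^w_{ij}(A)`: rows `I = w(J') ∪ {i}`, columns `J = J' ∪ {j}`,
where `J' = {b < j : w(b) > i}`, both listed in increasing order. -/
noncomputable def minorP {n : ℕ} {R : Type} [CommRing R] (w : Equiv.Perm (Fin n))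
    (A : Matrix (Fin n) (Fin n) R) (i j : Fin n) : R :=
  let J' : Finset (Fin n) := Finset.univ.filter (fun b => b < j ∧ i < w b)
  let JJ : Finset (Fin n) := insert j J'
  let II : Finset (Fin n) := insert i (J'.image w)
  if h : II.card = JJ.card then
    Matrix.det (Matrix.of fun a b : Fin JJ.card =>
      A ((II.orderIsoOfFin h) a).val ((JJ.orderIsoOfFin rfl) b).val)
  else 0

/-- Membership in the Borel subgroup `B` of invertible upper triangular matrices. -/
def InBorel {n : ℕ} {R : Type} [CommRing R] (b : Matrix (Fin n) (Fin n) R) : Prop :=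
  IsUnit b.det ∧ ∀ i j : Fin n, j < i → b i j = 0

/-- The permutation matrix `ẇ` of `w ∈ S_n`. -/
def permMat (n : ℕ) (K : Type) [Field K] (w : Equiv.Perm (Fin n)) :
    Matrix (Fin n) (Fin n) K :=
  fun a b => if a = w b then 1 else 0

namespace Bru

open Finset Matrix

variable {n : ℕ} {K : Type} [Field K]

lemma bt {b : Matrix (Fin n) (Fin n) K} (hb : InBorel b) :
    b.BlockTriangular id := fun i j h => hb.2 i j h

lemma detEq {b : Matrix (Fin n) (Fin n) K} (hb : InBorel b) :
    b.det = ∏ i, b i i := Matrix.det_of_upperTriangular (bt hb)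

lemma diagNe {b : Matrix (Fin n) (Fin n) K} (hb : InBorel b) (i : Fin n) :
    b i i ≠ 0 := by
  have h := hb.1
  rw [detEq hb] at h
  have h2 := h.ne_zero
  rw [Finset.prod_ne_zero_iff] at h2
  exact h2 i (Finset.mem_univ i)

lemma borelOne : InBorel (1 : Matrix (Fin n) (Fin n) K) :=
  ⟨by simp, fun i j h => Matrix.one_apply_ne (ne_of_gt h)⟩

lemma borelMul {b c : Matrix (Fin n) (Fin n) K} (hb : InBorel b) (hc : InBorel c) :
    InBorel (b * c) :=
  ⟨by rw [Matrix.det_mul]; exact hb.1.mul hc.1, fun i j h => (bt hb).mul (bt hc) h⟩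

lemma borelInv {b : Matrix (Fin n) (Fin n) K} (hb : InBorel b) : InBorel b⁻¹ := by
  haveI := b.invertibleOfIsUnitDet hb.1
  exact ⟨isUnit_nonsing_inv_det b hb.1,
    fun i j h => Matrix.blockTriangular_inv_of_blockTriangular (bt hb) h⟩

def Jp {n : ℕ} (w : Equiv.Perm (Fin n)) (i j : Fin n) : Finset (Fin n) :=
  Finset.univ.filter (fun b => b < j ∧ i < w b)

def Js {n : ℕ} (w : Equiv.Perm (Fin n)) (i j : Fin n) : Finset (Fin n) :=
  insert j (Jp w i j)

def Is {n : ℕ} (w : Equiv.Perm (Fin n)) (i j : Fin n) : Finset (Fin n) :=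
  insert i ((Jp w i j).image w)

variable {w : Equiv.Perm (Fin n)} {i j : Fin n}

lemma notMem_Jp : j ∉ Jp w i j := by simp [Jp]

lemma notMem_image : i ∉ (Jp w i j).image w := by
  intro hx
  rcases Finset.mem_image.1 hx with ⟨b, hb, hbi⟩
  have h2 := (Finset.mem_filter.1 hb).2.2
  rw [hbi] at h2
  exact lt_irrefl _ h2

lemma cardIs (w : Equiv.Perm (Fin n)) (i j : Fin n) : (Is w i j).card = (Js w i j).card := by
  rw [Is, Js, Finset.card_insert_of_notMem notMem_image,
    Finset.card_insert_of_notMem notMem_Jp,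
    Finset.card_image_of_injective _ w.injective]

lemma cardJs (w : Equiv.Perm (Fin n)) (i j : Fin n) : (Js w i j).card = (Jp w i j).card + 1 :=
  Finset.card_insert_of_notMem notMem_Jp

noncomputable def psi (w : Equiv.Perm (Fin n)) (i j : Fin n) : Fin (Js w i j).card → Fin n :=
  fun a => (Is w i j).orderEmbOfFin (cardIs w i j) a

noncomputable def phi (w : Equiv.Perm (Fin n)) (i j : Fin n) : Fin (Js w i j).card → Fin n :=
  fun b => (Js w i j).orderEmbOfFin rfl b

lemma psi_mem (a) : psi w i j a ∈ Is w i j := Finset.orderEmbOfFin_mem _ _ a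

lemma phi_mem (b) : phi w i j b ∈ Js w i j := Finset.orderEmbOfFin_mem _ _ b

lemma psi_strictMono : StrictMono (psi w i j) :=
  ((Is w i j).orderEmbOfFin (cardIs w i j)).strictMono

lemma phi_strictMono : StrictMono (phi w i j) :=
  ((Js w i j).orderEmbOfFin rfl).strictMono

lemma psi_inj : Function.Injective (psi w i j) := psi_strictMono.injective
lemma phi_inj : Function.Injective (phi w i j) := phi_strictMono.injective

lemma psi_image : Finset.univ.image (psi w i j) = Is w i j := by
  apply Finset.eq_of_subset_of_card_le
  · intro x hx
    rcases Finset.mem_image.1 hx with ⟨a, _, rfl⟩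
    exact psi_mem a
  · rw [Finset.card_image_of_injective _ psi_inj, Finset.card_univ, Fintype.card_fin, cardIs]

lemma mem_Is_ge {x : Fin n} (hx : x ∈ Is w i j) : i ≤ x := by
  rcases Finset.mem_insert.1 hx with rfl | hx
  · exact le_refl _
  · rcases Finset.mem_image.1 hx with ⟨b, hb, rfl⟩
    exact le_of_lt (Finset.mem_filter.1 hb).2.2

lemma mem_Js_le {x : Fin n} (hx : x ∈ Js w i j) : x ≤ j := by
  rcases Finset.mem_insert.1 hx with rfl | hx
  · exact le_refl _
  · exact le_of_lt (Finset.mem_filter.1 hx).2.1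

lemma minorP_eq (A : Matrix (Fin n) (Fin n) K) :
    minorP w A i j = Matrix.det (Matrix.of fun a b : Fin (Js w i j).card =>
      A (psi w i j a) (phi w i j b)) := by
  simp only [minorP]
  rw [dif_pos]
  · rfl
  · exact cardIs w i j

lemma det_sum_rows {k : ℕ} (f : Fin k → Fin n → (Fin k → K)) :
    Matrix.det (Matrix.of fun a c => ∑ r : Fin n, f a r c)
      = ∑ t : Fin k → Fin n, Matrix.det (Matrix.of fun a c => f a (t a) c) := by
  have h : ((Matrix.of fun a c => ∑ r : Fin n, f a r c) : Matrix (Fin k) (Fin k) K)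
      = fun a => ∑ r : Fin n, f a r := by
    ext a c
    simp
  show Matrix.detRowAlternating _ = _
  rw [h]
  exact (Matrix.detRowAlternating (R := K) (n := Fin k)).toMultilinearMap.map_sum (g := f)

lemma triple_apply (b₁ b₂ : Matrix (Fin n) (Fin n) K) (u : Equiv.Perm (Fin n)) (x y : Fin n) :
    (b₁ * permMat n K u * b₂) x y = ∑ r : Fin n, b₁ x (u r) * b₂ r y := by
  rw [Matrix.mul_assoc, Matrix.mul_apply]
  have h : ∀ s, (permMat n K u * b₂) s y = b₂ (u.symm s) y := by
    intro s
    rw [Matrix.mul_apply]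
    rw [Finset.sum_eq_single (u.symm s)]
    · simp [permMat]
    · intro r _ hr
      have hne : s ≠ u r := fun hh => hr (by rw [hh]; simp)
      simp [permMat, hne]
    · intro h
      exact absurd (Finset.mem_univ _) h
  simp_rw [h]
  exact (Fintype.sum_equiv u (fun r => b₁ x (u r) * b₂ r y)
    (fun s => b₁ x s * b₂ (u.symm s) y) (fun r => by simp only [Equiv.symm_apply_apply])).symm

lemma expand (b₁ b₂ : Matrix (Fin n) (Fin n) K) (u : Equiv.Perm (Fin n)) (i j : Fin n) :
    minorP w (b₁ * permMat n K u * b₂) i j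
      = ∑ t : Fin (Js w i j).card → Fin n,
          (∏ a, b₁ (psi w i j a) (u (t a)))
            * Matrix.det (Matrix.of fun a c => b₂ (t a) (phi w i j c)) := by
  rw [minorP_eq]
  have h1 : (Matrix.of fun a b : Fin (Js w i j).card =>
      (b₁ * permMat n K u * b₂) (psi w i j a) (phi w i j b))
      = Matrix.of fun a c => ∑ r : Fin n, b₁ (psi w i j a) (u r) * b₂ r (phi w i j c) := by
    ext a c
    exact triple_apply _ _ _ _ _
  rw [h1, det_sum_rows (f := fun a r c => b₁ (psi w i j a) (u r) * b₂ r (phi w i j c))]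
  refine Finset.sum_congr rfl (fun t _ => ?_)
  exact Matrix.det_mul_column _ _

lemma term_facts {b₁ b₂ : Matrix (Fin n) (Fin n) K} (hb₁ : InBorel b₁) (hb₂ : InBorel b₂)
    (u : Equiv.Perm (Fin n)) (t : Fin (Js w i j).card → Fin n)
    (h : (∏ a, b₁ (psi w i j a) (u (t a)))
        * Matrix.det (Matrix.of fun a c => b₂ (t a) (phi w i j c)) ≠ 0) :
    Function.Injective t ∧ ∀ a, t a ≤ j ∧ psi w i j a ≤ u (t a) := by
  have h1 : ∀ a, b₁ (psi w i j a) (u (t a)) ≠ 0 := by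
    intro a ha
    exact h (by rw [Finset.prod_eq_zero (Finset.mem_univ a) ha, zero_mul])
  have hdet : Matrix.det (Matrix.of fun a c => b₂ (t a) (phi w i j c)) ≠ 0 :=
    fun hd => h (by rw [hd, mul_zero])
  refine ⟨?_, fun a => ⟨?_, ?_⟩⟩
  · intro a a' haa
    by_contra hne
    exact hdet (Matrix.det_zero_of_row_eq hne (by funext c; simp only [Matrix.of_apply]; rw [haa]))
  · by_contra hgt
    push_neg at hgt
    refine hdet (Matrix.det_eq_zero_of_row_eq_zero a (fun c => ?_))
    exact hb₂.2 _ _ (lt_of_le_of_lt (mem_Js_le (phi_mem c)) hgt)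
  · by_contra hgt
    push_neg at hgt
    exact h1 a (hb₁.2 _ _ hgt)

lemma exists_of_minor_ne_zero {b₁ b₂ : Matrix (Fin n) (Fin n) K} (hb₁ : InBorel b₁)
    (hb₂ : InBorel b₂) (u : Equiv.Perm (Fin n))
    (h : minorP w (b₁ * permMat n K u * b₂) i j ≠ 0) :
    ∃ t : Fin (Js w i j).card → Fin n,
      Function.Injective t ∧ ∀ a, t a ≤ j ∧ i ≤ u (t a) := by
  rw [expand] at h
  obtain ⟨t, -, ht⟩ := Finset.exists_ne_zero_of_sum_ne_zero h
  obtain ⟨hinj, hfa⟩ := term_facts hb₁ hb₂ u t ht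
  exact ⟨t, hinj, fun a => ⟨(hfa a).1, le_trans (mem_Is_ge (psi_mem a)) (hfa a).2⟩⟩

lemma eq_of_dominates {k : ℕ} {g h' : Fin k → Fin n}
    (hg : Function.Injective g) (hh : Function.Injective h')
    (him : Finset.univ.image g = Finset.univ.image h')
    (hle : ∀ a, h' a ≤ g a) : ∀ a, g a = h' a := by
  have e1 : ∑ x ∈ Finset.univ.image g, (x : ℕ) = ∑ a, ((g a : Fin n) : ℕ) :=
    Finset.sum_image (fun x _ y _ hxy => hg hxy)
  have e2 : ∑ x ∈ Finset.univ.image h', (x : ℕ) = ∑ a, ((h' a : Fin n) : ℕ) :=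
    Finset.sum_image (fun x _ y _ hxy => hh hxy)
  have hsum : ∑ a, ((h' a : Fin n) : ℕ) = ∑ a, ((g a : Fin n) : ℕ) := by
    rw [← e1, ← e2, him]
  intro a
  by_contra hne
  have hlt : ((h' a : Fin n) : ℕ) < ((g a : Fin n) : ℕ) :=
    lt_of_le_of_ne (hle a) (fun hv => hne (Fin.ext hv).symm)
  have hlt2 : ∑ b, ((h' b : Fin n) : ℕ) < ∑ b, ((g b : Fin n) : ℕ) :=
    Finset.sum_lt_sum (fun b _ => hle b) ⟨a, Finset.mem_univ a, hlt⟩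
  exact (ne_of_lt hlt2) hsum

lemma minor_ne_zero {b₁ b₂ : Matrix (Fin n) (Fin n) K} (hb₁ : InBorel b₁) (hb₂ : InBorel b₂)
    (u : Equiv.Perm (Fin n))
    (h1 : ∀ b : Fin n, (b ≤ j ∧ i ≤ u b) ↔ b ∈ Js w i j)
    (h2 : ∀ b ∈ Jp w i j, u b = w b) (h3 : u j = i) :
    minorP w (b₁ * permMat n K u * b₂) i j ≠ 0 := by
  have himJ : (Js w i j).image u = Is w i j := by
    rw [Js, Is, Finset.image_insert, h3]
    congr 1
    exact Finset.image_congr (fun b hb => h2 b hb)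
  set t₀ : Fin (Js w i j).card → Fin n := fun a => u.symm (psi w i j a) with ht₀def
  have ht₀mem : ∀ a, t₀ a ∈ Js w i j := by
    intro a
    have hmem := psi_mem (w := w) (i := i) (j := j) a
    rw [← himJ] at hmem
    rcases Finset.mem_image.1 hmem with ⟨b, hb, hbe⟩
    have hbt : b = t₀ a := by
      rw [ht₀def]
      simp only [← hbe, Equiv.symm_apply_apply]
    rwa [← hbt]
  have hut₀ : ∀ a, u (t₀ a) = psi w i j a := fun a => u.apply_symm_apply _
  have ht₀inj : Function.Injective t₀ := fun a a' hh =>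
    psi_inj (by have := congrArg u hh; rwa [hut₀, hut₀] at this)
  have hterm : (∏ a, b₁ (psi w i j a) (u (t₀ a)))
      * Matrix.det (Matrix.of fun a c => b₂ (t₀ a) (phi w i j c)) ≠ 0 := by
    apply mul_ne_zero
    · rw [Finset.prod_ne_zero_iff]
      intro a _
      rw [hut₀]
      exact diagNe hb₁ _
    · set π : Fin (Js w i j).card → Fin (Js w i j).card :=
        fun a => ((Js w i j).orderIsoOfFin rfl).symm ⟨t₀ a, ht₀mem a⟩ with hπdef
      have hφπ : ∀ a, phi w i j (π a) = t₀ a := by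
        intro a
        show ((Js w i j).orderEmbOfFin rfl) (π a) = t₀ a
        rw [← Finset.coe_orderIsoOfFin_apply, hπdef]
        simp
      have hπinj : Function.Injective π := by
        intro a a' haa
        apply ht₀inj
        rw [← hφπ, ← hφπ, haa]
      have hπbij := Finite.injective_iff_bijective.1 hπinj
      have hsub : (Matrix.of fun a c => b₂ (t₀ a) (phi w i j c))
          = (Matrix.of fun a c => b₂ (phi w i j a) (phi w i j c)).submatrix
              (Equiv.ofBijective π hπbij) id := by
        ext a c
        simp only [Matrix.submatrix_apply, Matrix.of_apply, id]
        rw [show (Equiv.ofBijective π hπbij) a = π a from rfl, hφπ a]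
      rw [hsub, Matrix.det_permute]
      apply mul_ne_zero
      · rcases Int.units_eq_one_or (Equiv.Perm.sign (Equiv.ofBijective π hπbij)) with hs | hs <;>
          simp [hs]
      · have hupper : ((Matrix.of fun a c => b₂ (phi w i j a) (phi w i j c)) :
            Matrix (Fin (Js w i j).card) (Fin (Js w i j).card) K).BlockTriangular id :=
          fun a c hac => hb₂.2 _ _ (phi_strictMono (show c < a from hac))
        rw [Matrix.det_of_upperTriangular hupper, Finset.prod_ne_zero_iff]
        exact fun c _ => diagNe hb₂ _
  have hothers : ∀ t ∈ (Finset.univ : Finset (Fin (Js w i j).card → Fin n)), t ≠ t₀ →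
      (∏ a, b₁ (psi w i j a) (u (t a)))
        * Matrix.det (Matrix.of fun a c => b₂ (t a) (phi w i j c)) = 0 := by
    intro t _ htne
    by_contra hne0
    obtain ⟨hinj, hfa⟩ := term_facts hb₁ hb₂ u t hne0
    apply htne
    have hmemJs : ∀ a, t a ∈ Js w i j := fun a =>
      (h1 (t a)).1 ⟨(hfa a).1, le_trans (mem_Is_ge (psi_mem a)) (hfa a).2⟩
    have himt : Finset.univ.image t = Js w i j := by
      apply Finset.eq_of_subset_of_card_le
      · intro x hx
        rcases Finset.mem_image.1 hx with ⟨a, _, rfl⟩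
        exact hmemJs a
      · rw [Finset.card_image_of_injective _ hinj, Finset.card_univ, Fintype.card_fin]
    have himut : Finset.univ.image (fun a => u (t a)) = Is w i j := by
      rw [show (fun a => u (t a)) = u ∘ t from rfl, ← Finset.image_image, himt, himJ]
    have hpt := eq_of_dominates (g := fun a => u (t a)) (h' := psi w i j)
      (fun a a' haa => hinj (u.injective haa)) psi_inj
      (by rw [himut, psi_image]) (fun a => (hfa a).2)
    funext a
    rw [ht₀def]
    simp only
    rw [← hpt a, Equiv.symm_apply_apply]
  rw [expand, Finset.sum_eq_single_of_mem t₀ (Finset.mem_univ t₀) hothers]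
  exact hterm

def Red (j : ℕ) (M : Matrix (Fin n) (Fin n) K) : Prop :=
  ∀ c : Fin n, (c : ℕ) < j → ∃ r : Fin n,
    M r c = 1 ∧ (∀ x, x ≠ r → M x c = 0) ∧ (∀ y, y ≠ c → M r y = 0)

lemma reduce_step {M : Matrix (Fin n) (Fin n) K} (hM : IsUnit M.det) {j : ℕ} (hj : j < n)
    (hred : Red j M) : ∃ β₁ β₂ : Matrix (Fin n) (Fin n) K,
      InBorel β₁ ∧ InBorel β₂ ∧ Red (j + 1) (β₁ * M * β₂) := by
  set c₀ : Fin n := ⟨j, hj⟩ with hc₀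
  have hcol : ∃ r, M r c₀ ≠ 0 := by
    by_contra hc
    push_neg at hc
    exact hM.ne_zero (Matrix.det_eq_zero_of_column_eq_zero c₀ hc)
  set S : Finset (Fin n) := Finset.univ.filter (fun r => M r c₀ ≠ 0) with hS
  have hSne : S.Nonempty := by
    obtain ⟨r, hr⟩ := hcol
    exact ⟨r, Finset.mem_filter.2 ⟨Finset.mem_univ r, hr⟩⟩
  set r₀ := S.max' hSne with hr₀
  have hp : M r₀ c₀ ≠ 0 := (Finset.mem_filter.1 (S.max'_mem hSne)).2
  have hbelow : ∀ x, r₀ < x → M x c₀ = 0 := by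
    intro x hx
    by_contra hxz
    exact absurd (Finset.le_max' S x (Finset.mem_filter.2 ⟨Finset.mem_univ x, hxz⟩)) (not_le.2 hx)
  -- pivots of processed columns avoid r₀
  have hproc : ∀ c : Fin n, (c : ℕ) < j → ∀ r : Fin n,
      M r c = 1 ∧ (∀ x, x ≠ r → M x c = 0) ∧ (∀ y, y ≠ c → M r y = 0) →
      r ≠ r₀ ∧ M r₀ c = 0 ∧ M r c₀ = 0 := by
    intro c hc r hr
    have hcc₀ : c ≠ c₀ := by
      intro hcc
      rw [hcc] at hc
      simp [hc₀] at hc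
    have hrc₀ : M r c₀ = 0 := hr.2.2 c₀ (Ne.symm hcc₀)
    have hrr₀ : r ≠ r₀ := by
      intro hre
      rw [hre] at hrc₀
      exact hp hrc₀
    exact ⟨hrr₀, hr.2.1 r₀ (Ne.symm hrr₀), hrc₀⟩
  classical
  set p := M r₀ c₀ with hpdef
  set d : Fin n → K := fun x => if x = r₀ then p⁻¹ else 1 with hd
  set v : Fin n → K := fun x => if x < r₀ then -(M x c₀) else 0 with hv
  set C : Matrix (Fin n) (Fin n) K := Matrix.of (fun x y => if y = r₀ then v x else 0) with hC
  set β₁ : Matrix (Fin n) (Fin n) K := (1 + C) * Matrix.diagonal d with hβ₁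
  set N : Matrix (Fin n) (Fin n) K := β₁ * M with hN
  have hNe : ∀ x c, N x c = d x * M x c + v x * (p⁻¹ * M r₀ c) := by
    intro x c
    rw [hN, hβ₁, Matrix.mul_assoc, add_mul, Matrix.one_mul, Matrix.add_apply]
    congr 1
    · rw [Matrix.diagonal_mul]
    · rw [Matrix.mul_apply]
      have : ∀ s, C x s * (Matrix.diagonal d * M) s c
          = if s = r₀ then v x * (p⁻¹ * M r₀ c) else 0 := by
        intro s
        rw [hC, Matrix.of_apply, Matrix.diagonal_mul]
        by_cases hsr : s = r₀
        · subst hsr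
          simp [hd]
        · simp [hsr]
      simp_rw [this]
      rw [Finset.sum_ite_eq' Finset.univ r₀]
      simp
  have hNr₀ : ∀ c, N r₀ c = p⁻¹ * M r₀ c := by
    intro c
    rw [hNe]
    simp [hd, hv]
  have hNr₀c₀ : N r₀ c₀ = 1 := by rw [hNr₀, ← hpdef, inv_mul_cancel₀ hp]
  have hNxc₀ : ∀ x, x ≠ r₀ → N x c₀ = 0 := by
    intro x hx
    rw [hNe]
    simp only [hd, hv]
    rcases lt_trichotomy x r₀ with hlt | heq | hgt
    · rw [if_neg hx, if_pos hlt, ← hpdef, inv_mul_cancel₀ hp]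
      ring
    · exact absurd heq hx
    · rw [if_neg hx, if_neg (not_lt.2 (le_of_lt hgt)), hbelow x hgt]
      ring
  set g : Fin n → K := fun y => if c₀ < y then -(N r₀ y) else 0 with hg
  set C' : Matrix (Fin n) (Fin n) K := Matrix.of (fun x y => if x = c₀ then g y else 0) with hC'
  set β₂ : Matrix (Fin n) (Fin n) K := 1 + C' with hβ₂
  set F : Matrix (Fin n) (Fin n) K := N * β₂ with hF
  have hFe : ∀ x y, F x y = N x y + N x c₀ * g y := by
    intro x y
    rw [hF, hβ₂, mul_add, Matrix.mul_one, Matrix.add_apply]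
    congr 1
    rw [Matrix.mul_apply]
    have : ∀ s, N x s * C' s y = if s = c₀ then N x c₀ * g y else 0 := by
      intro s
      rw [hC', Matrix.of_apply]
      by_cases hsc : s = c₀
      · subst hsc; simp
      · simp [hsc]
    simp_rw [this]
    rw [Finset.sum_ite_eq' Finset.univ c₀]
    simp
  refine ⟨β₁, β₂, ?_, ?_, ?_⟩
  · -- InBorel β₁
    apply borelMul
    · have htri : ∀ x y : Fin n, y < x → (1 + C) x y = 0 := by
        intro x y hxy
        rw [Matrix.add_apply, Matrix.one_apply_ne (ne_of_gt hxy)]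
        simp only [hC, Matrix.of_apply, hv]
        by_cases hyr : y = r₀
        · rw [if_pos hyr, if_neg (not_lt.2 (le_of_lt (hyr ▸ hxy)))]
          ring
        · simp [hyr]
      refine ⟨?_, htri⟩
      have hdet : (1 + C).det = ∏ x, (1 + C) x x :=
        Matrix.det_of_upperTriangular (fun x y h => htri x y h)
      rw [hdet]
      have : ∀ x : Fin n, (1 + C) x x = 1 := by
        intro x
        rw [Matrix.add_apply, Matrix.one_apply_eq]
        simp only [hC, Matrix.of_apply, hv]
        by_cases hxr : x = r₀
        · subst hxr
          rw [if_pos rfl, if_neg (lt_irrefl r₀)]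
          ring
        · simp [hxr]
      simp [this]
    · refine ⟨?_, fun x y h => Matrix.diagonal_apply_ne _ (ne_of_gt h)⟩
      rw [Matrix.det_diagonal]
      rw [isUnit_iff_ne_zero, Finset.prod_ne_zero_iff]
      intro x _
      simp only [hd]
      by_cases hxr : x = r₀
      · rw [if_pos hxr]
        exact inv_ne_zero hp
      · rw [if_neg hxr]
        exact one_ne_zero
  · -- InBorel β₂
    have htri : ∀ x y : Fin n, y < x → β₂ x y = 0 := by
      intro x y hxy
      rw [hβ₂, Matrix.add_apply, Matrix.one_apply_ne (ne_of_gt hxy)]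
      simp only [hC', Matrix.of_apply, hg]
      by_cases hxc : x = c₀
      · rw [if_pos hxc, if_neg (not_lt.2 (le_of_lt (hxc ▸ hxy)))]
        ring
      · simp [hxc]
    refine ⟨?_, htri⟩
    have hdet : β₂.det = ∏ x, β₂ x x :=
      Matrix.det_of_upperTriangular (fun x y h => htri x y h)
    rw [hdet]
    have : ∀ x : Fin n, β₂ x x = 1 := by
      intro x
      rw [hβ₂, Matrix.add_apply, Matrix.one_apply_eq]
      simp only [hC', Matrix.of_apply, hg]
      by_cases hxc : x = c₀
      · subst hxc
        rw [if_pos rfl, if_neg (lt_irrefl c₀)]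
        ring
      · simp [hxc]
    simp [this]
  · -- Red (j+1)
    have hβMβ : β₁ * M * β₂ = F := by rw [hF, hN]
    rw [hβMβ]
    intro c hc
    rcases Nat.lt_or_ge (c : ℕ) j with hcj | hcj
    · -- processed column
      obtain ⟨r, hr⟩ := hred c hcj
      obtain ⟨hrr₀, hMr₀c, hMrc₀⟩ := hproc c hcj r hr
      have hNc : ∀ x, N x c = M x c := by
        intro x
        rw [hNe, hMr₀c]
        simp only [hd, hv]
        by_cases hxr : x = r₀
        · subst hxr
          rw [if_pos rfl, if_neg (lt_irrefl r₀), hMr₀c]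
          ring
        · rw [if_neg hxr]
          ring
      have hNrow : ∀ y, N r y = M r y := by
        intro y
        rw [hNe]
        simp only [hd, hv]
        rw [if_neg hrr₀]
        by_cases hlt : r < r₀
        · rw [if_pos hlt, hMrc₀]
          ring
        · rw [if_neg hlt]
          ring
      have hgc : g c = 0 := by
        simp only [hg]
        rw [if_neg]
        intro hlt
        have : (c₀ : ℕ) < (c : ℕ) := hlt
        simp [hc₀] at this
        omega
      refine ⟨r, ?_, ?_, ?_⟩
      · rw [hFe, hgc, hNc, hr.1]
        ring
      · intro x hx
        rw [hFe, hgc, hNc, hr.2.1 x hx]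
        ring
      · intro y hy
        rw [hFe, hNrow]
        have hNrc₀ : N r c₀ = 0 := hNxc₀ r hrr₀
        rw [hNrc₀, hr.2.2 y hy]
        ring
    · -- c = c₀
      have hcc₀ : c = c₀ := by
        apply Fin.ext
        simp only [hc₀]
        omega
      subst hcc₀
      refine ⟨r₀, ?_, ?_, ?_⟩
      · rw [hFe]
        simp only [hg]
        rw [if_neg (lt_irrefl c₀), hNr₀c₀]
        ring
      · intro x hx
        rw [hFe]
        simp only [hg]
        rw [if_neg (lt_irrefl c₀), hNxc₀ x hx]
        ring
      · intro y hy
        rw [hFe, hNr₀c₀, one_mul]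
        simp only [hg]
        by_cases hcy : c₀ < y
        · rw [if_pos hcy]
          ring
        · rw [if_neg hcy]
          have hyc : (y : ℕ) < j := by
            have h5 := lt_of_le_of_ne (not_lt.1 hcy) hy
            simpa [hc₀, Fin.lt_def] using h5
          obtain ⟨r, hr⟩ := hred y hyc
          obtain ⟨hrr₀, hMr₀y, _⟩ := hproc y hyc r hr
          rw [hNr₀, hMr₀y]
          ring

lemma reduce_all (A : Matrix (Fin n) (Fin n) K) (hA : IsUnit A.det) :
    ∀ j : ℕ, j ≤ n → ∃ b₁ b₂ : Matrix (Fin n) (Fin n) K,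
      InBorel b₁ ∧ InBorel b₂ ∧ Red j (b₁ * A * b₂) := by
  intro j
  induction j with
  | zero =>
      intro _
      exact ⟨1, 1, borelOne, borelOne, fun c hc => absurd hc (by omega)⟩
  | succ j ih =>
      intro hj
      obtain ⟨b₁, b₂, hb₁, hb₂, hred⟩ := ih (Nat.le_of_succ_le hj)
      have hdet : IsUnit (b₁ * A * b₂).det := by
        rw [Matrix.det_mul, Matrix.det_mul]
        exact (hb₁.1.mul hA).mul hb₂.1
      obtain ⟨β₁, β₂, hβ₁, hβ₂, hred'⟩ := reduce_step hdet (Nat.lt_of_succ_le hj) hred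
      refine ⟨β₁ * b₁, b₂ * β₂, borelMul hβ₁ hb₁, borelMul hb₂ hβ₂, ?_⟩
      have : β₁ * b₁ * A * (b₂ * β₂) = β₁ * (b₁ * A * b₂) * β₂ := by
        simp only [Matrix.mul_assoc]
      rw [this]
      exact hred'

lemma red_full {M : Matrix (Fin n) (Fin n) K} (hred : Red n M) :
    ∃ u : Equiv.Perm (Fin n), M = permMat n K u := by
  choose rfun hfun using fun c : Fin n => hred c c.isLt
  have hinj : Function.Injective rfun := by
    intro c c' hcc
    by_contra hne
    have h1 := (hfun c).2.2 c' (Ne.symm hne)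
    rw [hcc] at h1
    rw [(hfun c').1] at h1
    exact one_ne_zero h1
  refine ⟨Equiv.ofBijective rfun (Finite.injective_iff_bijective.1 hinj), ?_⟩
  funext x y
  show M x y = if x = rfun y then 1 else 0
  by_cases hxy : x = rfun y
  · rw [if_pos hxy, hxy, (hfun y).1]
  · rw [if_neg hxy]
    exact (hfun y).2.1 x hxy

lemma bruhat (A : Matrix (Fin n) (Fin n) K) (hA : IsUnit A.det) :
    ∃ (u : Equiv.Perm (Fin n)) (b₁ b₂ : Matrix (Fin n) (Fin n) K),
      InBorel b₁ ∧ InBorel b₂ ∧ A = b₁ * permMat n K u * b₂ := by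
  obtain ⟨b₁, b₂, hb₁, hb₂, hred⟩ := reduce_all A hA n le_rfl
  obtain ⟨u, hu⟩ := red_full hred
  refine ⟨u, b₁⁻¹, b₂⁻¹, borelInv hb₁, borelInv hb₂, ?_⟩
  rw [← hu]
  have hfin : b₁⁻¹ * (b₁ * A * b₂) * b₂⁻¹ = A := by
    rw [Matrix.mul_assoc b₁ A b₂, Matrix.nonsing_inv_mul_cancel_left _ _ hb₁.1,
      Matrix.mul_nonsing_inv_cancel_right _ _ hb₂.1]
  exact hfin.symm

lemma mem_Jp {b : Fin n} : b ∈ Jp w i j ↔ b < j ∧ i < w b := by simp [Jp]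

lemma mem_Js {b : Fin n} : b ∈ Js w i j ↔ b = j ∨ (b < j ∧ i < w b) := by
  rw [Js, Finset.mem_insert, mem_Jp]

lemma count_contra {u : Equiv.Perm (Fin n)} (t : Fin (Js w i j).card → Fin n)
    (hinj : Function.Injective t) (hfa : ∀ a, t a ≤ j ∧ i ≤ u (t a))
    (hsub : Finset.univ.filter (fun b => b ≤ j ∧ i ≤ u b) ⊆ Jp w i j) : False := by
  have hmem : ∀ a, t a ∈ Finset.univ.filter (fun b => b ≤ j ∧ i ≤ u b) := fun a =>
    Finset.mem_filter.2 ⟨Finset.mem_univ _, hfa a⟩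
  have h1 : (Js w i j).card ≤ (Finset.univ.filter (fun b => b ≤ j ∧ i ≤ u b)).card := by
    have h := Finset.card_le_card_of_injOn (s := (Finset.univ : Finset (Fin (Js w i j).card)))
      t (fun a _ => hmem a) (fun a _ a' _ h => hinj h)
    simpa using h
  have h2 := Finset.card_le_card hsub
  have h3 := cardJs w i j
  omega

end Bru

/-- an invertible matrix `A` lies in the double coset `B ẇ B` iff
for every column `j`, `P^w_{w(j),j}(A) ≠ 0` and `P^w_{ij}(A) = 0` for every
`i ∈ I_{w,j}` with `i ≠ w(j)`, where `I_{w,j} = {k ≥ w(j) : k ∉ {w(1),…,w(j-1)}}`. -/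
theorem stmt3 (n : ℕ) (hn : 2 ≤ n) (K : Type) [Field K] [CharZero K]
    (w : Equiv.Perm (Fin n)) (A : Matrix (Fin n) (Fin n) K) (hA : IsUnit A.det) :
    (∃ b₁ b₂ : Matrix (Fin n) (Fin n) K, InBorel b₁ ∧ InBorel b₂ ∧
        A = b₁ * permMat n K w * b₂) ↔
    ∀ j : Fin n, minorP w A (w j) j ≠ 0 ∧
      ∀ i : Fin n, w j ≤ i → (∀ b : Fin n, b < j → w b ≠ i) → i ≠ w j →
        minorP w A i j = 0 := by
  constructor
  · rintro ⟨b₁, b₂, hb₁, hb₂, rfl⟩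
    intro j
    constructor
    · refine Bru.minor_ne_zero hb₁ hb₂ w ?_ (fun b _ => rfl) rfl
      intro b
      rw [Bru.mem_Js]
      constructor
      · rintro ⟨hb1, hb2⟩
        rcases eq_or_lt_of_le hb1 with rfl | hlt
        · exact Or.inl rfl
        · refine Or.inr ⟨hlt, lt_of_le_of_ne hb2 ?_⟩
          intro heq
          exact (ne_of_lt hlt) (w.injective heq).symm
      · rintro (rfl | ⟨hb1, hb2⟩)
        · exact ⟨le_refl _, le_refl _⟩
        · exact ⟨le_of_lt hb1, le_of_lt hb2⟩
    · intro i hwj hnb hne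
      by_contra h0
      obtain ⟨t, hinj, hfa⟩ := Bru.exists_of_minor_ne_zero hb₁ hb₂ w h0
      refine Bru.count_contra t hinj hfa ?_
      intro b hb
      obtain ⟨-, hb1, hb2⟩ := Finset.mem_filter.1 hb
      rw [Bru.mem_Jp]
      rcases eq_or_lt_of_le hb1 with rfl | hlt
      · exact absurd (le_antisymm hwj hb2).symm hne
      · exact ⟨hlt, lt_of_le_of_ne hb2 (fun heq => hnb b hlt heq.symm)⟩
  · intro hcond
    obtain ⟨u, b₁, b₂, hb₁, hb₂, hAe⟩ := Bru.bruhat A hA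
    subst hAe
    have key : ∀ j : Fin n, (∀ b, b < j → u b = w b) → u j = w j := by
      intro j IH
      have hge : w j ≤ u j := by
        by_contra hnge
        obtain ⟨t, hinj, hfa⟩ :=
          Bru.exists_of_minor_ne_zero hb₁ hb₂ u (hcond j).1
        refine Bru.count_contra t hinj hfa ?_
        intro b hb
        obtain ⟨-, hb1, hb2⟩ := Finset.mem_filter.1 hb
        rw [Bru.mem_Jp]
        rcases eq_or_lt_of_le hb1 with rfl | hlt
        · exact absurd hb2 hnge
        · rw [IH b hlt] at hb2
          refine ⟨hlt, lt_of_le_of_ne hb2 ?_⟩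
          intro heq
          exact (ne_of_lt hlt) (w.injective heq).symm
      rcases eq_or_lt_of_le hge with heq | hlt
      · exact heq.symm
      · exfalso
        have hvan : minorP w (b₁ * permMat n K u * b₂) (u j) j = 0 := by
          refine (hcond j).2 (u j) (le_of_lt hlt) ?_ (ne_of_gt hlt)
          intro b hb heq
          rw [← IH b hb] at heq
          exact (ne_of_lt hb) (u.injective heq)
        refine Bru.minor_ne_zero hb₁ hb₂ u ?_ ?_ rfl hvan
        · intro b
          rw [Bru.mem_Js]
          constructor
          · rintro ⟨hb1, hb2⟩
            rcases eq_or_lt_of_le hb1 with rfl | hblt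
            · exact Or.inl rfl
            · rw [← IH b hblt]
              refine Or.inr ⟨hblt, lt_of_le_of_ne hb2 ?_⟩
              intro heq
              exact (ne_of_lt hblt) (u.injective heq).symm
          · rintro (rfl | ⟨hb1, hb2⟩)
            · exact ⟨le_refl _, le_refl _⟩
            · rw [← IH b hb1] at hb2
              exact ⟨le_of_lt hb1, le_of_lt hb2⟩
        · intro b hb
          rw [Bru.mem_Jp] at hb
          exact IH b hb.1
    have hall : ∀ m : ℕ, ∀ j : Fin n, (j : ℕ) < m → u j = w j := by
      intro m
      induction m with
      | zero => intro j hj; omega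
      | succ m ih =>
          intro j hjm
          rcases Nat.lt_or_ge (j : ℕ) m with h | h
          · exact ih j h
          · refine key j (fun b hb => ih b ?_)
            have : (b : ℕ) < (j : ℕ) := hb
            omega
    have huw : u = w := Equiv.ext (fun j => hall n j j.isLt)
    subst huw
    exact ⟨b₁, b₂, hb₁, hb₂, rfl⟩
end

section
/- Let A be a Poisson algebra over a field K of characteristic zero, and let p, q ∈ A with {p,q} = 1. Assume D_p is locally nilpotent. Then: (1) D_p maps A^⋄ into A^⋄; (2) the map Θ_p : A^⋄ → A defined by Θ_p(a) = Σ_{s≥0} (−1)^s D_p^s(a) q^s / s! (a finite sum by local nilpotency) takes values in A^⋄ and is a homomorphism of associative K-algebras satisfying Θ_p({a,b}) = {Θ_p(a), Θ_p(b)} for all a, b ∈ A^⋄; (3) {p, Θ_p(a)} = 0 and {q, Θ_p(a)} = 0 for every a ∈ A^⋄; (4) the kernel of Θ_p equals A^⋄ q = {bq : b ∈ A^⋄}. -/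
/-- A Poisson algebra structure on a commutative associative unital
`K`-algebra `A`: a bilinear, antisymmetric bracket satisfying the Jacobi
identity and the Leibniz rule. -/
structure PoissonStr (K A : Type) [Field K] [CommRing A] [Algebra K A] where
  bracket : A → A → A
  add_left : ∀ a b c : A, bracket (a + b) c = bracket a c + bracket b c
  smul_left : ∀ (r : K) (a b : A), bracket (r • a) b = r • bracket a b
  antisymm : ∀ a b : A, bracket a b = -bracket b a
  jacobi : ∀ a b c : A,
    bracket a (bracket b c) + bracket b (bracket c a) + bracket c (bracket a b) = 0
  leibniz : ∀ a b c : A, bracket a (b * c) = bracket a b * c + b * bracket a c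

set_option linter.unusedSectionVars false

namespace Stmt12Aux

variable {K A : Type} [Field K] [CharZero K] [CommRing A] [Algebra K A]

section basic
variable (P : PoissonStr K A)

lemma br0l (b : A) : P.bracket 0 b = 0 := by
  have h := P.smul_left 0 0 b; simpa using h

lemma br0r (a : A) : P.bracket a 0 = 0 := by
  rw [P.antisymm, br0l, neg_zero]

lemma braddr (a b c : A) : P.bracket a (b + c) = P.bracket a b + P.bracket a c := by
  rw [P.antisymm a (b + c), P.add_left, P.antisymm b a, P.antisymm c a]; ring

lemma brsmulr (r : K) (a b : A) : P.bracket a (r • b) = r • P.bracket a b := by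
  rw [P.antisymm a (r • b), P.smul_left, P.antisymm b a, smul_neg, neg_neg]

lemma brnegr (a b : A) : P.bracket a (-b) = -P.bracket a b := by
  have h := braddr P a b (-b)
  simp only [add_neg_cancel, br0r] at h
  linear_combination -h

lemma brnegl (a b : A) : P.bracket (-a) b = -P.bracket a b := by
  rw [P.antisymm (-a) b, brnegr, P.antisymm a b, neg_neg]

lemma br1r (a : A) : P.bracket a 1 = 0 := by
  have h := P.leibniz a 1 1
  simp only [mul_one, one_mul] at h
  linear_combination -h

lemma br1l (a : A) : P.bracket 1 a = 0 := by
  rw [P.antisymm, br1r, neg_zero]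

lemma br_sum_left {ι : Type} (s : Finset ι) (f : ι → A) (b : A) :
    P.bracket (∑ i ∈ s, f i) b = ∑ i ∈ s, P.bracket (f i) b :=
  map_sum (AddMonoidHom.mk' (fun a => P.bracket a b) (fun x y => P.add_left x y b)) f s

lemma br_sum_right {ι : Type} (s : Finset ι) (f : ι → A) (a : A) :
    P.bracket a (∑ i ∈ s, f i) = ∑ i ∈ s, P.bracket a (f i) :=
  map_sum (AddMonoidHom.mk' (fun b => P.bracket a b) (fun x y => braddr P a x y)) f s

end basic

/-- The operator `D_p = {p, ·}`. -/
def Dop (P : PoissonStr K A) (p : A) : A → A := fun x => P.bracket p x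

section dop
variable (P : PoissonStr K A) (p : A)

lemma jac' (a b : A) : P.bracket p (P.bracket a b)
    = P.bracket (P.bracket p a) b + P.bracket a (P.bracket p b) := by
  have h := P.jacobi p a b
  have h1 : P.bracket a (P.bracket b p) = -P.bracket a (P.bracket p b) := by
    rw [P.antisymm b p, brnegr]
  have h2 : P.bracket b (P.bracket p a) = -P.bracket (P.bracket p a) b :=
    P.antisymm _ _
  linear_combination h - h1 - h2

lemma D_add (a b : A) : Dop P p (a + b) = Dop P p a + Dop P p b := braddr P p a b

lemma D_smul (r : K) (a : A) : Dop P p (r • a) = r • Dop P p a := brsmulr P r p a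

lemma D_zero : Dop P p 0 = 0 := br0r P p

lemma D_mul (a b : A) : Dop P p (a * b) = Dop P p a * b + a * Dop P p b := P.leibniz p a b

lemma D_br (a b : A) : Dop P p (P.bracket a b)
    = P.bracket (Dop P p a) b + P.bracket a (Dop P p b) := jac' P p a b

/-- `Dop` as an additive monoid hom. -/
def DH (P : PoissonStr K A) (p : A) : A →+ A := AddMonoidHom.mk' (Dop P p) (D_add P p)

lemma D_sum {ι : Type} (s : Finset ι) (f : ι → A) :
    Dop P p (∑ i ∈ s, f i) = ∑ i ∈ s, Dop P p (f i) := map_sum (DH P p) f s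

lemma D_nsmul (n : ℕ) (a : A) : Dop P p (n • a) = n • Dop P p a := map_nsmul (DH P p) n a

lemma Dpow_zero (s : ℕ) : (Dop P p)^[s] 0 = 0 := Function.iterate_fixed (D_zero P p) s

lemma Dpow_add (s : ℕ) (a b : A) :
    (Dop P p)^[s] (a + b) = (Dop P p)^[s] a + (Dop P p)^[s] b := by
  induction s with
  | zero => simp
  | succ s ih => simp only [Function.iterate_succ_apply', ih, D_add]

lemma Dpow_smul (s : ℕ) (r : K) (a : A) :
    (Dop P p)^[s] (r • a) = r • (Dop P p)^[s] a := by
  induction s with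
  | zero => simp
  | succ s ih => simp only [Function.iterate_succ_apply', ih, D_smul]

lemma Dpow_stable {N : ℕ} {a : A} (h : (Dop P p)^[N] a = 0) {M : ℕ} (hNM : N ≤ M) :
    (Dop P p)^[M] a = 0 := by
  obtain ⟨k, rfl⟩ := Nat.exists_eq_add_of_le hNM
  rw [add_comm, Function.iterate_add_apply, h, Dpow_zero]

lemma Dpow_bilin (g : A → A → A)
    (hl : ∀ x y z : A, g (x + y) z = g x z + g y z)
    (hr : ∀ x y z : A, g x (y + z) = g x y + g x z)
    (hD : ∀ x y : A, Dop P p (g x y) = g (Dop P p x) y + g x (Dop P p y))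
    (a b : A) : ∀ s : ℕ, (Dop P p)^[s] (g a b)
      = ∑ i ∈ Finset.range (s + 1),
          (s.choose i) • g ((Dop P p)^[i] a) ((Dop P p)^[s - i] b) := by
  intro s
  induction s with
  | zero => simp
  | succ s ih =>
    rw [Function.iterate_succ_apply', ih, D_sum]
    have step : ∀ i ∈ Finset.range (s + 1),
        Dop P p ((s.choose i) • g ((Dop P p)^[i] a) ((Dop P p)^[s - i] b))
          = (s.choose i) • g ((Dop P p)^[i + 1] a) ((Dop P p)^[s - i] b)
            + (s.choose i) • g ((Dop P p)^[i] a) ((Dop P p)^[(s - i) + 1] b) := by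
      intro i _
      rw [D_nsmul, hD, smul_add, Function.iterate_succ_apply', Function.iterate_succ_apply']
    rw [Finset.sum_congr rfl step, Finset.sum_add_distrib]
    -- now the Pascal shuffle
    have h2 : ∑ i ∈ Finset.range (s + 1),
        (s.choose i) • g ((Dop P p)^[i] a) ((Dop P p)^[(s - i) + 1] b)
        = ∑ i ∈ Finset.range (s + 1),
            (s.choose i) • g ((Dop P p)^[i] a) ((Dop P p)^[s + 1 - i] b) := by
      refine Finset.sum_congr rfl fun i hi => ?_
      have : i ≤ s := Nat.lt_succ_iff.mp (Finset.mem_range.mp hi)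
      rw [Nat.sub_add_comm this]
    rw [h2, Finset.sum_range_succ' (fun i => (s.choose i) • g ((Dop P p)^[i] a) ((Dop P p)^[s + 1 - i] b)) s]
    rw [Finset.sum_range_succ' (fun i => ((s + 1).choose i) • g ((Dop P p)^[i] a) ((Dop P p)^[s + 1 - i] b)) (s + 1)]
    simp only [Nat.choose_zero_right, Nat.sub_zero, one_smul, Nat.succ_sub_succ]
    have h3 : ∑ i ∈ Finset.range (s + 1),
        ((s + 1).choose (i + 1)) • g ((Dop P p)^[i + 1] a) ((Dop P p)^[s - i] b)
        = ∑ i ∈ Finset.range (s + 1),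
            ((s.choose i) • g ((Dop P p)^[i + 1] a) ((Dop P p)^[s - i] b)
              + (s.choose (i + 1)) • g ((Dop P p)^[i + 1] a) ((Dop P p)^[s - i] b)) := by
      refine Finset.sum_congr rfl fun i hi => ?_
      rw [Nat.choose_succ_succ, add_smul]
    rw [h3, Finset.sum_add_distrib]
    have h4 : ∑ i ∈ Finset.range (s + 1),
        (s.choose (i + 1)) • g ((Dop P p)^[i + 1] a) ((Dop P p)^[s - i] b)
        = ∑ i ∈ Finset.range s,
            (s.choose (i + 1)) • g ((Dop P p)^[i + 1] a) ((Dop P p)^[s - i] b) := by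
      rw [Finset.sum_range_succ, Nat.choose_succ_self, zero_smul, add_zero]
    rw [h4]
    abel

end dop

section coeffs

/-- The coefficient `(-1)^s / s!`. -/
noncomputable def c (K : Type) [Field K] (s : ℕ) : K := (-1) ^ s / (s.factorial : K)

lemma fact_ne (s : ℕ) : ((s.factorial : K)) ≠ 0 :=
  Nat.cast_ne_zero.mpr (Nat.factorial_pos s).ne'

lemma c_zero : c K 0 = 1 := by simp [c]

lemma c_mul_choose {i s : ℕ} (h : i ≤ s) :
    (s.choose i : K) * c K s = c K i * c K (s - i) := by
  have key : ((s.choose i : ℕ) : K) * (i.factorial : K) * ((s - i).factorial : K)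
      = (s.factorial : K) := by
    exact_mod_cast congrArg (Nat.cast : ℕ → K) (Nat.choose_mul_factorial_mul_factorial h)
  have hpow : ((-1 : K)) ^ i * (-1) ^ (s - i) = (-1) ^ s := by
    rw [← pow_add, Nat.add_sub_cancel' h]
  unfold c
  rw [div_mul_div_comm, hpow, mul_div_assoc',
    div_eq_div_iff (fact_ne s) (mul_ne_zero (fact_ne i) (fact_ne (s - i)))]
  linear_combination ((-1 : K)) ^ s * key

lemma c_succ_mul (s : ℕ) : c K (s + 1) * ((s : K) + 1) = - c K s := by
  unfold c
  rw [Nat.factorial_succ, Nat.cast_mul, Nat.cast_add, Nat.cast_one]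
  have h0 := fact_ne (K := K) s
  have h1 : ((s : K) + 1) ≠ 0 := Nat.cast_add_one_ne_zero s
  field_simp
  ring

end coeffs

section cauchy

lemma cauchy {M : Type} [AddCommMonoid M] (T : ℕ) (F : ℕ → ℕ → M)
    (hF : ∀ i j, T ≤ i + j → F i j = 0) :
    ∑ s ∈ Finset.range T, ∑ i ∈ Finset.range (s + 1), F i (s - i)
      = ∑ i ∈ Finset.range T, ∑ j ∈ Finset.range T, F i j := by
  classical
  have h1 : ∑ s ∈ Finset.range T, ∑ i ∈ Finset.range (s + 1), F i (s - i)
      = ∑ x ∈ ((Finset.range T ×ˢ Finset.range T).filter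
          fun x : ℕ × ℕ => x.1 + x.2 < T), F x.1 x.2 := by
    rw [Finset.sum_sigma']
    refine Finset.sum_nbij' (fun x => (x.2, x.1 - x.2)) (fun y => ⟨y.1 + y.2, y.1⟩)
      ?_ ?_ ?_ ?_ ?_
    · rintro ⟨s, i⟩ hx
      simp only [Finset.mem_sigma, Finset.mem_range] at hx
      simp only [Finset.mem_filter, Finset.mem_product, Finset.mem_range]
      omega
    · rintro ⟨i, j⟩ hy
      simp only [Finset.mem_filter, Finset.mem_product, Finset.mem_range] at hy
      simp only [Finset.mem_sigma, Finset.mem_range]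
      omega
    · rintro ⟨s, i⟩ hx
      simp only [Finset.mem_sigma, Finset.mem_range] at hx
      have : i ≤ s := Nat.lt_succ_iff.mp hx.2
      simp only [Sigma.mk.inj_iff]
      constructor
      · omega
      · exact heq_of_eq rfl
    · rintro ⟨i, j⟩ hy
      simp only [Finset.mem_filter, Finset.mem_product, Finset.mem_range] at hy
      simp only [Prod.mk.injEq]
      exact ⟨trivial, by omega⟩
    · rintro ⟨s, i⟩ _
      rfl
  rw [h1, ← Finset.sum_product']
  refine Finset.sum_subset (Finset.filter_subset _ _) ?_
  intro x hx hx'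
  simp only [Finset.mem_filter, not_and, not_lt] at hx'
  exact hF _ _ (hx' hx)

end cauchy

section qlemmas
variable (P : PoissonStr K A) (p q : A)

lemma brqq : P.bracket q q = 0 := by
  have h := P.antisymm q q
  have h2 : (2 : K) • P.bracket q q = 0 := by
    rw [two_smul]; linear_combination h
  have h3 : P.bracket q q = (2 : K)⁻¹ • ((2 : K) • P.bracket q q) := by
    rw [smul_smul, inv_mul_cancel₀ (two_ne_zero), one_smul]
  rw [h3, h2, smul_zero]

lemma br_x_qpow {x : A} (h : P.bracket x q = 0) (n : ℕ) : P.bracket x (q ^ n) = 0 := by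
  induction n with
  | zero => rw [pow_zero, br1r]
  | succ n ih => rw [pow_succ, P.leibniz, ih, h, zero_mul, mul_zero, add_zero]

lemma br_qpow_q (n : ℕ) : P.bracket (q ^ n) q = 0 := by
  rw [P.antisymm, br_x_qpow P q (brqq P q) n, neg_zero]

variable (hpq : P.bracket p q = 1)

include hpq in
lemma diamond_D {a : A} (h : P.bracket a q = 0) : P.bracket (Dop P p a) q = 0 := by
  have hj := P.jacobi q p a
  rw [h, br0r] at hj
  have h2 : P.bracket a (P.bracket q p) = 0 := by
    rw [P.antisymm q p, hpq, brnegr, br1r, neg_zero]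
  rw [h2, add_zero, add_zero] at hj
  have : P.bracket (Dop P p a) q = -P.bracket q (P.bracket p a) := P.antisymm _ _
  rw [this, hj, neg_zero]

include hpq in
lemma diamond_Dpow {a : A} (h : P.bracket a q = 0) (s : ℕ) :
    P.bracket ((Dop P p)^[s] a) q = 0 := by
  induction s with
  | zero => simpa using h
  | succ s ih => rw [Function.iterate_succ_apply']; exact diamond_D P p q hpq ih

include hpq in
lemma D_qpow_succ (s : ℕ) : Dop P p (q ^ (s + 1)) = (s + 1) • q ^ s := by
  induction s with
  | zero => simpa [Dop] using hpq
  | succ s ih =>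
    have : q ^ (s + 2) = q * q ^ (s + 1) := by ring
    rw [this, D_mul, ih]
    have hq1 : Dop P p q = 1 := hpq
    rw [hq1, one_mul, mul_smul_comm]
    have : q * q ^ s = q ^ (s + 1) := by ring
    rw [this]
    simp only [succ_nsmul]
    abel

include hpq in
lemma br_shift {x y : A} (hx : P.bracket x q = 0) (hy : P.bracket y q = 0) (i j : ℕ) :
    P.bracket (x * q ^ i) (y * q ^ j) = P.bracket x y * q ^ (i + j) := by
  have h1 : P.bracket (x * q ^ i) y = P.bracket x y * q ^ i := by
    rw [P.antisymm (x * q ^ i) y, P.leibniz, br_x_qpow P q hy i, mul_zero, add_zero,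
      P.antisymm y x]
    ring
  have h2 : P.bracket (x * q ^ i) (q ^ j) = 0 := by
    rw [P.antisymm (x * q ^ i) (q ^ j), P.leibniz]
    have hxx : P.bracket (q ^ j) x = 0 := by
      rw [P.antisymm, br_x_qpow P q hx j, neg_zero]
    have hqq : P.bracket (q ^ j) (q ^ i) = 0 := br_x_qpow P q (br_qpow_q P q j) i
    rw [hxx, hqq, zero_mul, mul_zero, add_zero, neg_zero]
  rw [P.leibniz, h1, h2, mul_zero, add_zero, mul_assoc, ← pow_add]

end qlemmas

section theta
variable (P : PoissonStr K A) (p q : A) (Θ : A → A)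

lemma theta_bilin (g : A → A → A)
    (hl : ∀ x y z : A, g (x + y) z = g x z + g y z)
    (hr : ∀ x y z : A, g x (y + z) = g x y + g x z)
    (hsl : ∀ (r : K) (x y : A), g (r • x) y = r • g x y)
    (hsr : ∀ (r : K) (x y : A), g x (r • y) = r • g x y)
    (hD : ∀ x y : A, Dop P p (g x y) = g (Dop P p x) y + g x (Dop P p y))
    (hq : ∀ x y : A, P.bracket x q = 0 → P.bracket y q = 0 → ∀ i j : ℕ,
      g (x * q ^ i) (y * q ^ j) = g x y * q ^ (i + j))
    (hpq : P.bracket p q = 1)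
    (hΘ : ∀ (a : A) (N : ℕ), (Dop P p)^[N] a = 0 →
      Θ a = ∑ s ∈ Finset.range N, c K s • ((Dop P p)^[s] a * q ^ s))
    {a b : A} (ha : P.bracket a q = 0) (hb : P.bracket b q = 0)
    {N M : ℕ} (hN : (Dop P p)^[N] a = 0) (hM : (Dop P p)^[M] b = 0) :
    Θ (g a b) = g (Θ a) (Θ b) := by
  have g0l : ∀ y : A, g 0 y = 0 := by
    intro y; have h := hl 0 0 y; rw [add_zero] at h; linear_combination -h
  have g0r : ∀ y : A, g y 0 = 0 := by
    intro y; have h := hr y 0 0; rw [add_zero] at h; linear_combination -h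
  set T := N + M with hT
  have hTa : (Dop P p)^[T] a = 0 := Dpow_stable P p hN (Nat.le_add_right _ _)
  have hTb : (Dop P p)^[T] b = 0 := Dpow_stable P p hM (Nat.le_add_left _ _)
  have hvan : ∀ i j, T ≤ i + j → g ((Dop P p)^[i] a) ((Dop P p)^[j] b) = 0 := by
    intro i j hij
    rcases le_or_gt N i with h | h
    · rw [Dpow_stable P p hN h, g0l]
    · have hMj : M ≤ j := by omega
      rw [Dpow_stable P p hM hMj, g0r]
  have hgab : (Dop P p)^[T] (g a b) = 0 := by
    rw [Dpow_bilin P p g hl hr hD a b T]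
    refine Finset.sum_eq_zero fun i hi => ?_
    have hiT : i ≤ T := Nat.lt_succ_iff.mp (Finset.mem_range.mp hi)
    rw [hvan i (T - i) (by omega), smul_zero]
  set F : ℕ → ℕ → A := fun i j =>
    (c K i * c K j) • (g ((Dop P p)^[i] a) ((Dop P p)^[j] b) * q ^ (i + j)) with hF
  have hFvan : ∀ i j, T ≤ i + j → F i j = 0 := by
    intro i j hij
    show (c K i * c K j) • (g ((Dop P p)^[i] a) ((Dop P p)^[j] b) * q ^ (i + j)) = 0
    rw [hvan i j hij, zero_mul, smul_zero]
  have lhs : Θ (g a b) = ∑ i ∈ Finset.range T, ∑ j ∈ Finset.range T, F i j := by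
    rw [hΘ (g a b) T hgab, ← cauchy T F hFvan]
    refine Finset.sum_congr rfl fun s hs => ?_
    rw [Dpow_bilin P p g hl hr hD a b s, Finset.sum_mul, Finset.smul_sum]
    refine Finset.sum_congr rfl fun i hi => ?_
    have his : i ≤ s := Nat.lt_succ_iff.mp (Finset.mem_range.mp hi)
    show c K s • ((s.choose i • g ((Dop P p)^[i] a) ((Dop P p)^[s - i] b)) * q ^ s)
      = (c K i * c K (s - i)) •
        (g ((Dop P p)^[i] a) ((Dop P p)^[s - i] b) * q ^ (i + (s - i)))
    rw [Nat.add_sub_cancel' his, smul_mul_assoc, ← Nat.cast_smul_eq_nsmul K, smul_smul,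
      mul_comm (c K s), c_mul_choose his]
  have rhs : g (Θ a) (Θ b) = ∑ i ∈ Finset.range T, ∑ j ∈ Finset.range T, F i j := by
    rw [hΘ a T hTa, hΘ b T hTb]
    have step1 : g (∑ i ∈ Finset.range T, c K i • ((Dop P p)^[i] a * q ^ i))
        (∑ j ∈ Finset.range T, c K j • ((Dop P p)^[j] b * q ^ j))
        = ∑ i ∈ Finset.range T, g (c K i • ((Dop P p)^[i] a * q ^ i))
            (∑ j ∈ Finset.range T, c K j • ((Dop P p)^[j] b * q ^ j)) :=
      map_sum (AddMonoidHom.mk' (fun x => g x _) (fun x y => hl x y _)) _ _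
    rw [step1]
    refine Finset.sum_congr rfl fun i _ => ?_
    have step2 : g (c K i • ((Dop P p)^[i] a * q ^ i))
        (∑ j ∈ Finset.range T, c K j • ((Dop P p)^[j] b * q ^ j))
        = ∑ j ∈ Finset.range T, g (c K i • ((Dop P p)^[i] a * q ^ i))
            (c K j • ((Dop P p)^[j] b * q ^ j)) :=
      map_sum (AddMonoidHom.mk' (fun y => g _ y) (fun x y => hr _ x y)) _ _
    rw [step2]
    refine Finset.sum_congr rfl fun j _ => ?_
    show g (c K i • ((Dop P p)^[i] a * q ^ i)) (c K j • ((Dop P p)^[j] b * q ^ j)) = F i j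
    rw [hsl, hsr, smul_smul,
      hq _ _ (diamond_Dpow P p q hpq ha i) (diamond_Dpow P p q hpq hb j) i j]

  rw [lhs, rhs]

end theta

end Stmt12Aux

open Stmt12Aux

/-- let `{p,q} = 1` with `D_p = {p,·}` locally nilpotent, and let
`Θ_p(a) = Σ_s (−1)^s D_p^s(a) q^s / s!` (any `Θ` agreeing with all the finite
truncations of this sum).  Then: (1) `D_p` maps `A^⋄ = {a : {a,q} = 0}` into
itself; (2) `Θ_p` maps `A^⋄` into `A^⋄` and is a homomorphism of associative
`K`-algebras preserving the Poisson bracket; (3) `{p, Θ_p a} = 0 = {q, Θ_p a}`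
for `a ∈ A^⋄`; (4) the kernel of `Θ_p` on `A^⋄` is `A^⋄ q`. -/
theorem stmt12 (K A : Type) [Field K] [CharZero K] [CommRing A] [Algebra K A]
    (P : PoissonStr K A) (p q : A) (hpq : P.bracket p q = 1)
    (hnil : ∀ a : A, ∃ s : ℕ, (fun x => P.bracket p x)^[s] a = 0)
    (Θ : A → A)
    (hΘ : ∀ (a : A) (N : ℕ), (fun x => P.bracket p x)^[N] a = 0 →
      Θ a = ∑ s ∈ Finset.range N,
        ((-1 : K) ^ s / (s.factorial : K)) • ((fun x => P.bracket p x)^[s] a * q ^ s)) :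
    (∀ a : A, P.bracket a q = 0 → P.bracket (P.bracket p a) q = 0) ∧
    (∀ a : A, P.bracket a q = 0 → P.bracket (Θ a) q = 0) ∧
    (Θ 1 = 1) ∧
    (∀ a b : A, P.bracket a q = 0 → P.bracket b q = 0 → Θ (a + b) = Θ a + Θ b) ∧
    (∀ (r : K) (a : A), P.bracket a q = 0 → Θ (r • a) = r • Θ a) ∧
    (∀ a b : A, P.bracket a q = 0 → P.bracket b q = 0 → Θ (a * b) = Θ a * Θ b) ∧
    (∀ a b : A, P.bracket a q = 0 → P.bracket b q = 0 →
      Θ (P.bracket a b) = P.bracket (Θ a) (Θ b)) ∧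
    (∀ a : A, P.bracket a q = 0 →
      P.bracket p (Θ a) = 0 ∧ P.bracket q (Θ a) = 0) ∧
    (∀ a : A, P.bracket a q = 0 →
      (Θ a = 0 ↔ ∃ b : A, P.bracket b q = 0 ∧ a = b * q)) := by
  have hΘ' : ∀ (a : A) (N : ℕ), (Dop P p)^[N] a = 0 →
      Θ a = ∑ s ∈ Finset.range N, c K s • ((Dop P p)^[s] a * q ^ s) := hΘ
  have hnil' : ∀ a : A, ∃ s : ℕ, (Dop P p)^[s] a = 0 := hnil
  -- part 1
  have part1 : ∀ a : A, P.bracket a q = 0 → P.bracket (P.bracket p a) q = 0 :=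
    fun a ha => diamond_D P p q hpq ha
  -- {q, Θ a} = 0
  have part_q : ∀ a : A, P.bracket a q = 0 → P.bracket q (Θ a) = 0 := by
    intro a ha
    obtain ⟨N, hN⟩ := hnil' a
    rw [hΘ' a N hN, br_sum_right]
    refine Finset.sum_eq_zero fun s _ => ?_
    rw [brsmulr, P.leibniz]
    have h1 : P.bracket q ((Dop P p)^[s] a) = 0 := by
      rw [P.antisymm, diamond_Dpow P p q hpq ha s, neg_zero]
    rw [h1, zero_mul, br_x_qpow P q (brqq P q) s, mul_zero, add_zero, smul_zero]
  have part2 : ∀ a : A, P.bracket a q = 0 → P.bracket (Θ a) q = 0 :=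
    fun a ha => by rw [P.antisymm, part_q a ha, neg_zero]
  -- Θ 1 = 1
  have part_one : Θ 1 = 1 := by
    have h1 : (Dop P p)^[1] 1 = 0 := by
      simpa [Dop] using br1r P p
    rw [hΘ' 1 1 h1, Finset.sum_range_one]
    simp [c_zero]
  -- additivity
  have part_add : ∀ a b : A, Θ (a + b) = Θ a + Θ b := by
    intro a b
    obtain ⟨N, hN⟩ := hnil' a
    obtain ⟨M, hM⟩ := hnil' b
    have hTa : (Dop P p)^[N + M] a = 0 := Dpow_stable P p hN (Nat.le_add_right _ _)
    have hTb : (Dop P p)^[N + M] b = 0 := Dpow_stable P p hM (Nat.le_add_left _ _)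
    have hTab : (Dop P p)^[N + M] (a + b) = 0 := by
      rw [Dpow_add, hTa, hTb, add_zero]
    rw [hΘ' (a + b) (N + M) hTab, hΘ' a (N + M) hTa, hΘ' b (N + M) hTb,
      ← Finset.sum_add_distrib]
    refine Finset.sum_congr rfl fun s _ => ?_
    rw [Dpow_add, add_mul, smul_add]
  -- smul
  have part_smul : ∀ (r : K) (a : A), Θ (r • a) = r • Θ a := by
    intro r a
    obtain ⟨N, hN⟩ := hnil' a
    have hra : (Dop P p)^[N] (r • a) = 0 := by rw [Dpow_smul, hN, smul_zero]
    rw [hΘ' (r • a) N hra, hΘ' a N hN, Finset.smul_sum]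
    refine Finset.sum_congr rfl fun s _ => ?_
    rw [Dpow_smul, smul_mul_assoc, smul_comm]
  -- multiplicativity
  have part_mul : ∀ a b : A, P.bracket a q = 0 → P.bracket b q = 0 →
      Θ (a * b) = Θ a * Θ b := by
    intro a b ha hb
    obtain ⟨N, hN⟩ := hnil' a
    obtain ⟨M, hM⟩ := hnil' b
    exact theta_bilin P p q Θ (fun x y => x * y)
      (fun x y z => add_mul x y z) (fun x y z => mul_add x y z)
      (fun r x y => smul_mul_assoc r x y) (fun r x y => mul_smul_comm r x y)
      (fun x y => P.leibniz p x y)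
      (fun x y _ _ i j => by rw [pow_add]; ring) hpq hΘ' ha hb hN hM
  -- bracket preservation
  have part_br : ∀ a b : A, P.bracket a q = 0 → P.bracket b q = 0 →
      Θ (P.bracket a b) = P.bracket (Θ a) (Θ b) := by
    intro a b ha hb
    obtain ⟨N, hN⟩ := hnil' a
    obtain ⟨M, hM⟩ := hnil' b
    exact theta_bilin P p q Θ P.bracket
      (fun x y z => P.add_left x y z) (fun x y z => braddr P x y z)
      (fun r x y => P.smul_left r x y) (fun r x y => brsmulr P r x y)
      (fun x y => jac' P p x y)
      (fun x y hx hy i j => br_shift P p q hpq hx hy i j) hpq hΘ' ha hb hN hM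
  -- {p, Θ a} = 0
  have part_p : ∀ a : A, P.bracket a q = 0 → P.bracket p (Θ a) = 0 := by
    intro a ha
    obtain ⟨N, hN⟩ := hnil' a
    have hN1 : (Dop P p)^[N + 1] a = 0 := Dpow_stable P p hN (Nat.le_succ N)
    rw [hΘ' a (N + 1) hN1, br_sum_right]
    set u : ℕ → A := fun s => c K s • ((Dop P p)^[s + 1] a * q ^ s) with hu
    have hterm0 : P.bracket p (c K 0 • ((Dop P p)^[0] a * q ^ 0)) = u 0 := by
      rw [brsmulr, hu]
      simp only [Function.iterate_zero_apply, pow_zero, mul_one]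
      rfl
    have htermS : ∀ s : ℕ,
        P.bracket p (c K (s + 1) • ((Dop P p)^[s + 1] a * q ^ (s + 1))) = u (s + 1) - u s := by
      intro s
      rw [brsmulr]
      have hlb : P.bracket p ((Dop P p)^[s + 1] a * q ^ (s + 1))
          = (Dop P p)^[s + 2] a * q ^ (s + 1) + (Dop P p)^[s + 1] a * ((s + 1) • q ^ s) := by
        rw [P.leibniz p ((Dop P p)^[s + 1] a) (q ^ (s + 1))]
        have e1 : P.bracket p ((Dop P p)^[s + 1] a) = (Dop P p)^[s + 2] a :=
          (Function.iterate_succ_apply' (Dop P p) (s + 1) a).symm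
        have e2 : P.bracket p (q ^ (s + 1)) = (s + 1) • q ^ s := D_qpow_succ P p q hpq s
        rw [e1, e2]
      rw [hlb, smul_add]
      have h2 : c K (s + 1) • ((Dop P p)^[s + 1] a * ((s + 1) • q ^ s)) = -u s := by
        rw [mul_smul_comm, ← Nat.cast_smul_eq_nsmul K, smul_smul]
        have hc : c K (s + 1) * (((s : ℕ) + 1 : ℕ) : K) = - c K s := by
          push_cast
          exact c_succ_mul s
        rw [hc, hu, neg_smul]
      rw [h2, hu, sub_eq_add_neg]
    rw [Finset.sum_range_succ'
      (fun s => P.bracket p (c K s • ((Dop P p)^[s] a * q ^ s))) N]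
    rw [hterm0]
    have : ∑ s ∈ Finset.range N,
        P.bracket p (c K (s + 1) • ((Dop P p)^[s + 1] a * q ^ (s + 1)))
        = ∑ s ∈ Finset.range N, (u (s + 1) - u s) :=
      Finset.sum_congr rfl fun s _ => htermS s
    rw [this, Finset.sum_range_sub u N]
    have huN : u N = 0 := by
      rw [hu]
      simp only
      rw [hN1, zero_mul, smul_zero]
    rw [huN]
    abel
  -- kernel
  have part_ker : ∀ a : A, P.bracket a q = 0 →
      (Θ a = 0 ↔ ∃ b : A, P.bracket b q = 0 ∧ a = b * q) := by
    intro a ha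
    constructor
    · intro h0
      obtain ⟨N, hN⟩ := hnil' a
      have hN1 : (Dop P p)^[N + 1] a = 0 := Dpow_stable P p hN (Nat.le_succ N)
      have heq := hΘ' a (N + 1) hN1
      rw [h0, Finset.sum_range_succ'
        (fun s => c K s • ((Dop P p)^[s] a * q ^ s)) N] at heq
      have hc0 : c K 0 • ((Dop P p)^[0] a * q ^ 0) = a := by
        simp [c_zero]
      rw [hc0] at heq
      refine ⟨-∑ s ∈ Finset.range N, c K (s + 1) • ((Dop P p)^[s + 1] a * q ^ s), ?_, ?_⟩
      · rw [brnegl, br_sum_left, Finset.sum_eq_zero, neg_zero]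
        intro s _
        rw [P.smul_left]
        have hz : P.bracket ((Dop P p)^[s + 1] a * q ^ s) q = 0 := by
          rw [P.antisymm, P.leibniz]
          have h1 : P.bracket q ((Dop P p)^[s + 1] a) = 0 := by
            rw [P.antisymm, diamond_Dpow P p q hpq ha (s + 1), neg_zero]
          rw [h1, zero_mul, br_x_qpow P q (brqq P q) s, mul_zero, add_zero, neg_zero]
        rw [hz, smul_zero]
      · have hsum : (∑ s ∈ Finset.range N, c K (s + 1) • ((Dop P p)^[s + 1] a * q ^ s)) * q
            = ∑ s ∈ Finset.range N, c K (s + 1) • ((Dop P p)^[s + 1] a * q ^ (s + 1)) := by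
          rw [Finset.sum_mul]
          refine Finset.sum_congr rfl fun s _ => ?_
          rw [smul_mul_assoc, mul_assoc, ← pow_succ]
        rw [neg_mul, hsum]
        linear_combination -heq
    · rintro ⟨b, hb, rfl⟩
      have hq2 : (Dop P p)^[2] q = 0 := by
        show Dop P p (Dop P p q) = 0
        show P.bracket p (P.bracket p q) = 0
        rw [hpq, br1r]
      have hΘq : Θ q = 0 := by
        rw [hΘ' q 2 hq2, Finset.sum_range_succ, Finset.sum_range_one]
        simp only [Function.iterate_zero_apply, Function.iterate_one, pow_zero, pow_one,
          mul_one]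
        have hq1 : Dop P p q = 1 := hpq
        rw [hq1, one_mul, c_zero, one_smul]
        have hc1 : c K 1 = -1 := by simp [c]
        rw [hc1, neg_smul, one_smul, add_neg_cancel]
      rw [part_mul b q hb (brqq P q), hΘq, mul_zero]
  exact ⟨part1, part2, part_one, fun a b _ _ => part_add a b, fun r a _ => part_smul r a,
    part_mul, part_br, fun a ha => ⟨part_p a ha, part_q a ha⟩, part_ker⟩
end

section
/- Let K be a field of characteristic zero and D ⊆ Δ⁺ a basic subset. Then the vanishing ideal I(V_D^∘) of the basic cell is a prime ideal of K[x_γ : γ ∈ Δ⁺]; equivalently, the basic cone V_D (the Zariski closure of V_D^∘) is irreducible. -/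
open scoped Classical

/-- The variable set `{x_γ : γ ∈ Δ⁺}`: positive roots of `Δ⁺`. -/
abbrev PRoot (n : ℕ) : Type := {γ : ℕ × ℕ // IsPosRoot n γ}

/-- A point `v : Δ⁺ → K` of `𝔫₋` realized as a strictly lower triangular
matrix (`1`-based roots, `0`-based matrix indices). -/
noncomputable def matOf (n : ℕ) (K : Type) [Field K] (v : PRoot n → K) :
    Matrix (Fin n) (Fin n) K :=
  fun a b =>
    if h : IsPosRoot n ((a : ℕ) + 1, (b : ℕ) + 1) then v ⟨((a : ℕ) + 1, (b : ℕ) + 1), h⟩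
    else 0

/-- The point of `𝔫₋` given by the strictly lower triangular entries of a
matrix. -/
noncomputable def vecOf (n : ℕ) (K : Type) [Field K] (A : Matrix (Fin n) (Fin n) K)
    (γ : PRoot n) : K :=
  A ⟨γ.1.1 - 1, by obtain ⟨h1, h2, h3⟩ := γ.2; omega⟩
    ⟨γ.1.2 - 1, by obtain ⟨h1, h2, h3⟩ := γ.2; omega⟩

/-- `π`: the strictly lower triangular part of a matrix. -/
def lowerPart (n : ℕ) (K : Type) [Field K] (A : Matrix (Fin n) (Fin n) K) :
    Matrix (Fin n) (Fin n) K :=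
  fun a b => if (b : ℕ) < (a : ℕ) then A a b else 0

/-- Membership in `N = UT(n,K)`: upper triangular with units on the diagonal. -/
def IsUni (n : ℕ) (K : Type) [Field K] (g : Matrix (Fin n) (Fin n) K) : Prop :=
  (∀ i : Fin n, g i i = 1) ∧ ∀ i j : Fin n, j < i → g i j = 0

/-- The element `X_{D,φ} = Σ_{ξ ∈ D} φ(ξ) E_ξ` of `𝔫₋`. -/
noncomputable def XDphi (n : ℕ) (K : Type) [Field K] (D : Set (ℕ × ℕ)) (φ : ℕ × ℕ → K) :
    Matrix (Fin n) (Fin n) K :=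
  fun a b => if ((a : ℕ) + 1, (b : ℕ) + 1) ∈ D then φ ((a : ℕ) + 1, (b : ℕ) + 1) else 0

/-- The basic variety `V_{D,φ} = {π(g X_{D,φ} h) : g, h ∈ N}`, as a set of
points of `𝔫₋`. -/
noncomputable def VDvar (n : ℕ) (K : Type) [Field K] (D : Set (ℕ × ℕ)) (φ : ℕ × ℕ → K) :
    Set (PRoot n → K) :=
  {v | ∃ g h : Matrix (Fin n) (Fin n) K, IsUni n K g ∧ IsUni n K h ∧
    v = vecOf n K (lowerPart n K (g * XDphi n K D φ * h))}

/-- The basic cell `V_D^∘ = ⋃_φ V_{D,φ}`, over all `φ : D → K ∖ {0}`. -/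
noncomputable def VDcell (n : ℕ) (K : Type) [Field K] (D : Set (ℕ × ℕ)) :
    Set (PRoot n → K) :=
  {v | ∃ φ : ℕ × ℕ → K, (∀ γ ∈ D, φ γ ≠ 0) ∧ v ∈ VDvar n K D φ}

/-- The vanishing ideal `I(S)` of a set of points `S`. -/
noncomputable def vanishing (σ K : Type) [Field K] (S : Set (σ → K)) :
    Ideal (MvPolynomial σ K) where
  carrier := {f | ∀ v ∈ S, MvPolynomial.eval v f = 0}
  add_mem' := by
    intro a b ha hb v hv
    simp [map_add, ha v hv, hb v hv]
  zero_mem' := by intro v hv; simp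
  smul_mem' := by
    intro c f hf v hv
    simp [smul_eq_mul, hf v hv]
/-- `Y_w^∘ = {X ∈ 𝔫₋ : 1 + X ∈ B ẇ B}`, as a set of points of `𝔫₋`. -/
noncomputable def YwCell (n : ℕ) (K : Type) [Field K] (w : Equiv.Perm (Fin n)) :
    Set (PRoot n → K) :=
  {v | ∃ b₁ b₂ : Matrix (Fin n) (Fin n) K, InBorel b₁ ∧ InBorel b₂ ∧
    1 + matOf n K v = b₁ * permMat n K w * b₂}

section Aux16

/-- Parameter variables: entries of `g`, entries of `h`, and values of `φ`. -/
abbrev Sig (n : ℕ) : Type := (Fin n × Fin n) ⊕ (Fin n × Fin n) ⊕ (ℕ × ℕ)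

/-- Generic unitriangular matrix (for `g`). -/
noncomputable def Gg (n : ℕ) (K : Type) [Field K] :
    Matrix (Fin n) (Fin n) (MvPolynomial (Sig n) K) :=
  fun a b => if a = b then 1 else if (a : ℕ) < (b : ℕ) then MvPolynomial.X (.inl (a, b)) else 0

/-- Generic unitriangular matrix (for `h`). -/
noncomputable def Hg (n : ℕ) (K : Type) [Field K] :
    Matrix (Fin n) (Fin n) (MvPolynomial (Sig n) K) :=
  fun a b => if a = b then 1 else if (a : ℕ) < (b : ℕ) then MvPolynomial.X (.inr (.inl (a, b))) else 0

/-- Generic `X_{D,φ}`. -/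
noncomputable def XDg (n : ℕ) (K : Type) [Field K] (D : Set (ℕ × ℕ)) :
    Matrix (Fin n) (Fin n) (MvPolynomial (Sig n) K) :=
  fun a b => if ((a : ℕ) + 1, (b : ℕ) + 1) ∈ D then
    MvPolynomial.X (.inr (.inr ((a : ℕ) + 1, (b : ℕ) + 1))) else 0

/-- Specialization of `Gg` at a point `p`. -/
noncomputable def gOf (n : ℕ) (K : Type) [Field K] (p : Sig n → K) :
    Matrix (Fin n) (Fin n) K :=
  fun a b => if a = b then 1 else if (a : ℕ) < (b : ℕ) then p (.inl (a, b)) else 0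

/-- Specialization of `Hg` at a point `p`. -/
noncomputable def hOf (n : ℕ) (K : Type) [Field K] (p : Sig n → K) :
    Matrix (Fin n) (Fin n) K :=
  fun a b => if a = b then 1 else if (a : ℕ) < (b : ℕ) then p (.inr (.inl (a, b))) else 0

/-- Specialization of the `φ`-variables at a point `p`. -/
noncomputable def phiOf (n : ℕ) (K : Type) [Field K] (p : Sig n → K) : ℕ × ℕ → K :=
  fun γ => p (.inr (.inr γ))

/-- The generic polynomial giving coordinate `γ` of `π(g X_{D,φ} h)`. -/
noncomputable def Pgen (n : ℕ) (K : Type) [Field K] (D : Set (ℕ × ℕ)) (γ : PRoot n) :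
    MvPolynomial (Sig n) K :=
  (Gg n K * XDg n K D * Hg n K)
    ⟨γ.1.1 - 1, by obtain ⟨h1, h2, h3⟩ := γ.2; omega⟩
    ⟨γ.1.2 - 1, by obtain ⟨h1, h2, h3⟩ := γ.2; omega⟩

lemma gOf_isUni (n : ℕ) (K : Type) [Field K] (p : Sig n → K) : IsUni n K (gOf n K p) := by
  refine ⟨fun i => by simp [gOf], fun i j hji => ?_⟩
  have h1 : ¬ (i = j) := by rintro rfl; exact absurd hji (lt_irrefl _)
  have h2 : ¬ ((i : ℕ) < (j : ℕ)) := by omega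
  simp [gOf, h1, h2]

lemma hOf_isUni (n : ℕ) (K : Type) [Field K] (p : Sig n → K) : IsUni n K (hOf n K p) := by
  refine ⟨fun i => by simp [hOf], fun i j hji => ?_⟩
  have h1 : ¬ (i = j) := by rintro rfl; exact absurd hji (lt_irrefl _)
  have h2 : ¬ ((i : ℕ) < (j : ℕ)) := by omega
  simp [hOf, h1, h2]

lemma map_Gg (n : ℕ) (K : Type) [Field K] (p : Sig n → K) :
    (Gg n K).map (MvPolynomial.eval p) = gOf n K p := by
  funext a b
  simp only [Matrix.map_apply, Gg, gOf]
  split_ifs <;> simp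

lemma map_Hg (n : ℕ) (K : Type) [Field K] (p : Sig n → K) :
    (Hg n K).map (MvPolynomial.eval p) = hOf n K p := by
  funext a b
  simp only [Matrix.map_apply, Hg, hOf]
  split_ifs <;> simp

lemma map_XDg (n : ℕ) (K : Type) [Field K] (D : Set (ℕ × ℕ)) (p : Sig n → K) :
    (XDg n K D).map (MvPolynomial.eval p) = XDphi n K D (phiOf n K p) := by
  funext a b
  simp only [Matrix.map_apply, XDg, XDphi, phiOf]
  split_ifs <;> simp

/-- Evaluating the generic coordinate polynomials at `p` gives the point of `V_{D,φ}`
corresponding to the matrices built from `p`. -/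
lemma eval_Pgen (n : ℕ) (K : Type) [Field K] (D : Set (ℕ × ℕ)) (p : Sig n → K) :
    (fun γ => MvPolynomial.eval p (Pgen n K D γ)) =
      vecOf n K (lowerPart n K (gOf n K p * XDphi n K D (phiOf n K p) * hOf n K p)) := by
  funext γ
  obtain ⟨h1, h2, h3⟩ := γ.2
  have hlt : γ.1.2 - 1 < γ.1.1 - 1 := by omega
  have key : (gOf n K p * XDphi n K D (phiOf n K p) * hOf n K p) =
      ((Gg n K * XDg n K D * Hg n K).map (MvPolynomial.eval p)) := by
    rw [Matrix.map_mul, Matrix.map_mul, map_Gg, map_Hg, map_XDg]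
  simp only [vecOf, lowerPart, key, Matrix.map_apply, Pgen]
  rw [if_pos hlt]

/-- More generally: with parameters packaged from arbitrary unitriangular `g, h` and `φ`. -/
lemma pack_spec (n : ℕ) (K : Type) [Field K] (g h : Matrix (Fin n) (Fin n) K)
    (hg : IsUni n K g) (hh : IsUni n K h) (φ : ℕ × ℕ → K) :
    gOf n K (Sum.elim (fun ab => g ab.1 ab.2) (Sum.elim (fun ab => h ab.1 ab.2) φ)) = g ∧
    hOf n K (Sum.elim (fun ab => g ab.1 ab.2) (Sum.elim (fun ab => h ab.1 ab.2) φ)) = h ∧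
    phiOf n K (Sum.elim (fun ab => g ab.1 ab.2) (Sum.elim (fun ab => h ab.1 ab.2) φ)) = φ := by
  refine ⟨?_, ?_, rfl⟩
  · funext a b
    simp only [gOf, Sum.elim_inl]
    split_ifs with e1 e2
    · subst e1; exact (hg.1 a).symm
    · rfl
    · exact (hg.2 a b (by omega)).symm
  · funext a b
    simp only [hOf, Sum.elim_inr, Sum.elim_inl]
    split_ifs with e1 e2
    · subst e1; exact (hh.1 a).symm
    · rfl
    · exact (hh.2 a b (by omega)).symm

lemma eval_bind₁' {K : Type} [Field K] {σ τ : Type} (x : τ → K)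
    (P : σ → MvPolynomial τ K) (f : MvPolynomial σ K) :
    MvPolynomial.eval x (MvPolynomial.bind₁ P f) =
      MvPolynomial.eval (fun i => MvPolynomial.eval x (P i)) f :=
  MvPolynomial.eval₂Hom_bind₁ _ _ _ _

end Aux16


lemma mem_vanishing {σ K : Type} [Field K] (S : Set (σ → K)) (f : MvPolynomial σ K) :
    f ∈ vanishing σ K S ↔ ∀ v ∈ S, MvPolynomial.eval v f = 0 := Iff.rfl

/-- the vanishing ideal `I(V_D^∘)` of the basic cell is a prime
ideal of `K[x_γ : γ ∈ Δ⁺]`; equivalently, the basic cone `V_D` is irreducible. -/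
theorem stmt16 (n : ℕ) (hn : 2 ≤ n) (K : Type) [Field K] [CharZero K]
    (D : Set (ℕ × ℕ)) (hD : IsBasic n D) :
    (vanishing (PRoot n) K (VDcell n K D)).IsPrime := by
  classical
  set ψ : MvPolynomial (PRoot n) K →ₐ[K] MvPolynomial (Sig n) K :=
    MvPolynomial.bind₁ (Pgen n K D) with hψ
  have hfin : D.Finite := by
    apply Set.Finite.subset (Set.finite_Icc ((1 : ℕ), (1 : ℕ)) (n, n))
    intro γ hγ
    obtain ⟨h1, h2, h3⟩ := hD.1 γ hγ
    simp only [Set.mem_Icc, Prod.le_def]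
    omega
  have hQ : (∏ γ ∈ hfin.toFinset,
      (MvPolynomial.X (Sum.inr (Sum.inr γ)) : MvPolynomial (Sig n) K)) ≠ 0 :=
    Finset.prod_ne_zero_iff.mpr fun γ _ => MvPolynomial.X_ne_zero _
  have hker : vanishing (PRoot n) K (VDcell n K D) = RingHom.ker ψ := by
    ext f
    rw [mem_vanishing, RingHom.mem_ker]
    constructor
    · intro hf
      have hz : ψ f * ∏ γ ∈ hfin.toFinset,
          (MvPolynomial.X (Sum.inr (Sum.inr γ)) : MvPolynomial (Sig n) K) = 0 := by
        apply MvPolynomial.funext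
        intro p
        rw [map_zero, map_mul, map_prod]
        by_cases hp : ∀ γ ∈ D, p (Sum.inr (Sum.inr γ)) ≠ 0
        · have hv : vecOf n K (lowerPart n K
              (gOf n K p * XDphi n K D (phiOf n K p) * hOf n K p)) ∈ VDcell n K D :=
            ⟨phiOf n K p, hp, gOf n K p, hOf n K p, gOf_isUni n K p, hOf_isUni n K p, rfl⟩
          have heval : MvPolynomial.eval p (ψ f) = 0 := by
            rw [hψ, eval_bind₁', eval_Pgen]
            exact hf _ hv
          rw [heval, zero_mul]
        · push_neg at hp
          obtain ⟨γ, hγD, hγ0⟩ := hp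
          have : (∏ γ ∈ hfin.toFinset,
              MvPolynomial.eval p (MvPolynomial.X (Sum.inr (Sum.inr γ)) :
                MvPolynomial (Sig n) K)) = 0 := by
            apply Finset.prod_eq_zero (hfin.mem_toFinset.mpr hγD)
            simp [hγ0]
          rw [this, mul_zero]
      rcases mul_eq_zero.mp hz with h | h
      · exact h
      · exact absurd h hQ
    · intro hf v hv
      obtain ⟨φ, hφ, g, h, hg, hh, rfl⟩ := hv
      set p : Sig n → K :=
        Sum.elim (fun ab => g ab.1 ab.2) (Sum.elim (fun ab => h ab.1 ab.2) φ) with hp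
      obtain ⟨e1, e2, e3⟩ := pack_spec n K g h hg hh φ
      have : MvPolynomial.eval p (ψ f) =
          MvPolynomial.eval (vecOf n K (lowerPart n K (g * XDphi n K D φ * h))) f := by
        rw [hψ, eval_bind₁', eval_Pgen]
        rw [← hp] at e1 e2 e3
        rw [e1, e2, e3]
      rw [hf, map_zero] at this
      exact this.symm
  rw [hker]
  exact RingHom.ker_isPrime ψ
end

section
/- Let K be a field of characteristic zero, n = 8, and D = {(4,1), (7,2), (8,3), (5,4)} ⊆ Δ⁺, V_D^∘ the corresponding basic cell. Then the polynomial F = x_{84}x_{41} + x_{83}x_{31} is invariant under the coadjoint action of N = UT(8,K) on V_D^∘: for every g ∈ N and every X ∈ V_D^∘, F(π(g X g⁻¹)) = F(X). -/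
open scoped Classical

/-- The basic cell `V_D^∘ = ⋃_{φ : D → K∖{0}} {π(g X_{D,φ} h) : g, h ∈ N}`,
as a set of strictly lower triangular matrices. -/
noncomputable def VDcellM (n : ℕ) (K : Type) [Field K] (D : Set (ℕ × ℕ)) :
    Set (Matrix (Fin n) (Fin n) K) :=
  {Y | ∃ φ : ℕ × ℕ → K, (∀ γ ∈ D, φ γ ≠ 0) ∧
    ∃ g h : Matrix (Fin n) (Fin n) K, IsUni n K g ∧ IsUni n K h ∧
      Y = lowerPart n K (g * XDphi n K D φ * h)}

section Aux

variable (K : Type) [Field K]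

lemma uni_blockTriangular {g : Matrix (Fin 8) (Fin 8) K} (hg : IsUni 8 K g) :
    g.BlockTriangular id := fun i j hij => hg.2 i j hij

lemma uni_det {g : Matrix (Fin 8) (Fin 8) K} (hg : IsUni 8 K g) : g.det = 1 := by
  rw [Matrix.det_of_upperTriangular (uni_blockTriangular K hg)]
  simp [hg.1]

lemma uni_inv_diag {g : Matrix (Fin 8) (Fin 8) K} (hg : IsUni 8 K g)
    (hmul : g * g⁻¹ = 1) (htri : ∀ i j : Fin 8, j < i → g⁻¹ i j = 0) :
    ∀ i : Fin 8, g⁻¹ i i = 1 := by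
  intro i
  have h1 : (g * g⁻¹) i i = 1 := by rw [hmul]; simp
  rw [Matrix.mul_apply] at h1
  have hz : ∀ k : Fin 8, k ∈ Finset.univ → k ≠ i → g i k * g⁻¹ k i = 0 := by
    intro k _ hk
    rcases lt_or_gt_of_ne hk with h | h
    · rw [hg.2 i k h, zero_mul]
    · rw [htri k i h, mul_zero]
  rw [Finset.sum_eq_single i hz (by simp)] at h1
  rw [hg.1 i, one_mul] at h1
  exact h1

lemma uni_inv_facts {g : Matrix (Fin 8) (Fin 8) K} (hg : IsUni 8 K g) :
    (∀ i j : Fin 8, j < i → g⁻¹ i j = 0) ∧ (∀ i : Fin 8, g⁻¹ i i = 1) ∧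
      g⁻¹ 2 3 = -(g 2 3) := by
  have hdet : IsUnit g.det := by rw [uni_det K hg]; exact isUnit_one
  have hinv : Invertible g := g.invertibleOfIsUnitDet hdet
  have hmul : g * g⁻¹ = 1 := g.mul_nonsing_inv hdet
  have hbt : g⁻¹.BlockTriangular id :=
    Matrix.blockTriangular_inv_of_blockTriangular (uni_blockTriangular K hg)
  have htri : ∀ i j : Fin 8, j < i → g⁻¹ i j = 0 := fun i j hij => hbt hij
  have hdiag := uni_inv_diag K hg hmul htri
  refine ⟨htri, hdiag, ?_⟩
  have h0 : (g * g⁻¹) 2 3 = 0 := by rw [hmul]; simp [Matrix.one_apply]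
  rw [Matrix.mul_apply, Fin.sum_univ_eight] at h0
  rw [hg.2 2 0 (by decide), hg.2 2 1 (by decide), htri 4 3 (by decide),
    htri 5 3 (by decide), htri 6 3 (by decide), htri 7 3 (by decide),
    hg.1 2, hdiag 3] at h0
  linear_combination h0

set_option maxHeartbeats 2000000 in
lemma cell_prod_entry (D : Set (ℕ × ℕ)) (hD : D = {(4, 1), (7, 2), (8, 3), (5, 4)})
    (φ : ℕ × ℕ → K) (g₀ h₀ : Matrix (Fin 8) (Fin 8) K) (a b : Fin 8) :
    (g₀ * XDphi 8 K D φ * h₀) a b =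
      φ (4,1) * (g₀ a 3 * h₀ 0 b) + φ (7,2) * (g₀ a 6 * h₀ 1 b) +
      φ (8,3) * (g₀ a 7 * h₀ 2 b) + φ (5,4) * (g₀ a 4 * h₀ 3 b) := by
  subst hD
  simp only [Matrix.mul_apply, Fin.sum_univ_eight, XDphi, Set.mem_insert_iff,
    Set.mem_singleton_iff, Prod.mk.injEq,
    (by decide : ((0:Fin 8):ℕ) = 0), (by decide : ((1:Fin 8):ℕ) = 1),
    (by decide : ((2:Fin 8):ℕ) = 2), (by decide : ((3:Fin 8):ℕ) = 3),
    (by decide : ((4:Fin 8):ℕ) = 4), (by decide : ((5:Fin 8):ℕ) = 5),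
    (by decide : ((6:Fin 8):ℕ) = 6), (by decide : ((7:Fin 8):ℕ) = 7)]
  norm_num
  ring

end Aux

set_option maxHeartbeats 2000000 in
/-- for `n = 8` and `D = {(4,1),(7,2),(8,3),(5,4)}`, the
polynomial `F = x_{84} x_{41} + x_{83} x_{31}` is invariant under the coadjoint
action `X ↦ π(g X g⁻¹)` of `N = UT(8,K)` on the basic cell `V_D^∘`
(matrix indices below are `0`-based: `x_{ij}(X) = X (i-1) (j-1)`). -/
theorem stmt18 (K : Type) [Field K] [CharZero K]
    (D : Set (ℕ × ℕ)) (hD : D = {(4, 1), (7, 2), (8, 3), (5, 4)})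
    (F : Matrix (Fin 8) (Fin 8) K → K)
    (hF : ∀ X, F X = X 7 3 * X 3 0 + X 7 2 * X 2 0) :
    ∀ g : Matrix (Fin 8) (Fin 8) K, IsUni 8 K g →
      ∀ X ∈ VDcellM 8 K D, F (lowerPart 8 K (g * X * g⁻¹)) = F X := by
  intro g hg X hX
  obtain ⟨φ, -, g₀, h₀, hg₀, hh₀, hXeq⟩ := hX
  obtain ⟨htri, hdiag, h23⟩ := uni_inv_facts K hg
  -- entries of X on the cell
  have hXval : ∀ a b : Fin 8, X a b =
      if (b : ℕ) < (a : ℕ) then (g₀ * XDphi 8 K D φ * h₀) a b else 0 := by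
    intro a b; rw [hXeq]; rfl
  have key : ∀ a b : Fin 8, ((b : ℕ) < (a : ℕ)) → X a b =
      φ (4,1) * (g₀ a 3 * h₀ 0 b) + φ (7,2) * (g₀ a 6 * h₀ 1 b) +
      φ (8,3) * (g₀ a 7 * h₀ 2 b) + φ (5,4) * (g₀ a 4 * h₀ 3 b) := by
    intro a b hab
    rw [hXval a b, if_pos hab, cell_prod_entry K D hD φ g₀ h₀ a b]
  have hXup : ∀ a b : Fin 8, ¬ ((b : ℕ) < (a : ℕ)) → X a b = 0 := by
    intro a b hab; rw [hXval a b, if_neg hab]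
  -- vanishing entries
  have hx40 : X 4 0 = 0 := by
    rw [key 4 0 (by decide), hg₀.2 4 3 (by decide), hh₀.2 1 0 (by decide),
      hh₀.2 2 0 (by decide), hh₀.2 3 0 (by decide)]; ring
  have hx50 : X 5 0 = 0 := by
    rw [key 5 0 (by decide), hg₀.2 5 3 (by decide), hh₀.2 1 0 (by decide),
      hh₀.2 2 0 (by decide), hh₀.2 3 0 (by decide)]; ring
  have hx60 : X 6 0 = 0 := by
    rw [key 6 0 (by decide), hg₀.2 6 3 (by decide), hh₀.2 1 0 (by decide),
      hh₀.2 2 0 (by decide), hh₀.2 3 0 (by decide)]; ring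
  have hx70 : X 7 0 = 0 := by
    rw [key 7 0 (by decide), hg₀.2 7 3 (by decide), hh₀.2 1 0 (by decide),
      hh₀.2 2 0 (by decide), hh₀.2 3 0 (by decide), hg₀.2 7 6 (by decide),
      hg₀.2 7 4 (by decide)]; ring
  have hx71 : X 7 1 = 0 := by
    rw [key 7 1 (by decide), hg₀.2 7 3 (by decide), hg₀.2 7 6 (by decide),
      hh₀.2 2 1 (by decide), hg₀.2 7 4 (by decide)]; ring
  have hx00 : X 0 0 = 0 := hXup 0 0 (by decide)
  have hx77 : X 7 7 = 0 := hXup 7 7 (by decide)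
  -- entries of Y = lowerPart (g * X * g⁻¹)
  have hYval : ∀ a b : Fin 8, ((b : ℕ) < (a : ℕ)) →
      lowerPart 8 K (g * X * g⁻¹) a b = (g * X * g⁻¹) a b := by
    intro a b hab; unfold lowerPart; rw [if_pos hab]
  have hY73 : lowerPart 8 K (g * X * g⁻¹) 7 3 = X 7 3 - g 2 3 * X 7 2 := by
    rw [hYval 7 3 (by decide)]
    simp only [Matrix.mul_apply, Fin.sum_univ_eight]
    rw [hg.2 7 0 (by decide), hg.2 7 1 (by decide), hg.2 7 2 (by decide),
      hg.2 7 3 (by decide), hg.2 7 4 (by decide), hg.2 7 5 (by decide),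
      hg.2 7 6 (by decide), hg.1 7,
      htri 4 3 (by decide), htri 5 3 (by decide), htri 6 3 (by decide),
      htri 7 3 (by decide), hdiag 3, h23, hx70, hx71]
    ring
  have hY72 : lowerPart 8 K (g * X * g⁻¹) 7 2 = X 7 2 := by
    rw [hYval 7 2 (by decide)]
    simp only [Matrix.mul_apply, Fin.sum_univ_eight]
    rw [hg.2 7 0 (by decide), hg.2 7 1 (by decide), hg.2 7 2 (by decide),
      hg.2 7 3 (by decide), hg.2 7 4 (by decide), hg.2 7 5 (by decide),
      hg.2 7 6 (by decide), hg.1 7,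
      htri 3 2 (by decide), htri 4 2 (by decide), htri 5 2 (by decide),
      htri 6 2 (by decide), htri 7 2 (by decide), hdiag 2, hx70, hx71]
    ring
  have hY30 : lowerPart 8 K (g * X * g⁻¹) 3 0 = X 3 0 := by
    rw [hYval 3 0 (by decide)]
    simp only [Matrix.mul_apply, Fin.sum_univ_eight]
    rw [hg.2 3 0 (by decide), hg.2 3 1 (by decide), hg.2 3 2 (by decide), hg.1 3,
      htri 1 0 (by decide), htri 2 0 (by decide), htri 3 0 (by decide),
      htri 4 0 (by decide), htri 5 0 (by decide), htri 6 0 (by decide),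
      htri 7 0 (by decide), hdiag 0, hx40, hx50, hx60, hx70]
    ring
  have hY20 : lowerPart 8 K (g * X * g⁻¹) 2 0 = X 2 0 + g 2 3 * X 3 0 := by
    rw [hYval 2 0 (by decide)]
    simp only [Matrix.mul_apply, Fin.sum_univ_eight]
    rw [hg.2 2 0 (by decide), hg.2 2 1 (by decide), hg.1 2,
      htri 1 0 (by decide), htri 2 0 (by decide), htri 3 0 (by decide),
      htri 4 0 (by decide), htri 5 0 (by decide), htri 6 0 (by decide),
      htri 7 0 (by decide), hdiag 0, hx40, hx50, hx60, hx70]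
    ring
  rw [hF, hF, hY73, hY72, hY30, hY20]
  ring
end
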